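/- arXiv:2403.12709 — 13 statements merged into one kernel-verified Lean document; each statement's English description precedes it below -/
import Mathlib

section
/- Let G be a finite group acting on R = K[x_1,...,x_n] by linear transformations of the variables, with |G| invertible in K. Then any product of |G| polynomials from R_+ (the polynomials with zero constant term) lies in the Hilbert ideal H = R·R^G_+. In particular, every monomial of degree |G| lies in H. -/
open MvPolynomial Finset

/-!
Fogarty's argument, for a finite group `G` acting on a commutative ring `A` and a `G`-stable
ideal `I` with `p : G → I`. For every `σ`, the product `∏ g, (p g - (σ * g) • p g)`
vanishes because of its factor `g = σ⁻¹`. Expanding these products and summing over `σ`, the term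
of the full subset is `|G| * ∏ g, p g`, while every other term is a multiple of a transfer
`∑ σ, σ • q` with `q ∈ I`, an invariant element of `I`.
-/

theorem Multiset.exists_prod_univ_eq_prod {ι M : Type*} [Fintype ι] [CommMonoid M]
    (m : Multiset M) (h : Multiset.card m = Fintype.card ι) :
    ∃ f : ι → M, (∀ i, f i ∈ m) ∧ ∏ i, f i = m.prod := by
  obtain ⟨l, rfl⟩ : ∃ l : List M, (l : Multiset M) = m := Quotient.exists_rep m
  rw [Multiset.coe_card] at h
  let e : ι ≃ Fin l.length := (Fintype.equivFin ι).trans (finCongr h.symm)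
  refine ⟨fun i ↦ l[e i], fun i ↦ List.getElem_mem _, ?_⟩
  rw [Multiset.prod_coe, ← Fin.prod_univ_getElem]
  exact e.prod_comp fun j ↦ l[j.1]

namespace MvPolynomial

theorem constantCoeff_algHom_apply {σ τ R : Type*} [CommSemiring R]
    (φ : MvPolynomial σ R →ₐ[R] MvPolynomial τ R) (hφ : ∀ i, constantCoeff (φ (X i)) = 0)
    (f : MvPolynomial σ R) : constantCoeff (φ f) = constantCoeff f := by
  have : constantCoeff.comp (φ : MvPolynomial σ R →+* MvPolynomial τ R) = constantCoeff :=
    ringHom_ext (fun a ↦ by simp [← algebraMap_eq]) (fun i ↦ by simp [hφ])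
  exact RingHom.congr_fun this f

theorem prod_toMultiset_map_X {σ R : Type*} [CommSemiring R] (d : σ →₀ ℕ) :
    (d.toMultiset.map (X : σ → MvPolynomial σ R)).prod = monomial d 1 := by
  induction d using Finsupp.induction with
  | zero => simp
  | single_add i k d _ _ ih =>
    rw [Finsupp.toMultiset_add, Multiset.map_add, Multiset.prod_add, ih, Finsupp.toMultiset_single,
      Multiset.map_nsmul, Multiset.map_singleton, Multiset.prod_nsmul, Multiset.prod_singleton,
      X_pow_eq_monomial, monomial_mul, one_mul]

end MvPolynomial

section Transfer

variable {A G : Type*} [CommRing A] [Group G] [Fintype G] [MulSemiringAction G A]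

theorem smul_sum_smul {M : Type*} [AddCommMonoid M] [DistribMulAction G M] (τ : G) (m : M) :
    τ • ∑ σ : G, σ • m = ∑ σ : G, σ • m := by
  simp_rw [smul_sum, smul_smul]
  exact Fintype.sum_equiv (Equiv.mulLeft τ) _ _ fun _ ↦ rfl

theorem sum_prod_sub_smul_eq_zero (p : G → A) : ∑ σ : G, ∏ g, (p g - (σ * g) • p g) = 0 :=
  sum_eq_zero fun σ _ ↦ prod_eq_zero (mem_univ σ⁻¹) (by simp)

theorem prod_sub_smul_eq_sum_powerset [DecidableEq G] (p : G → A) (σ : G) :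
    ∏ g, (p g - (σ * g) • p g) = ∑ t ∈ univ.powerset,
      (∏ g ∈ t, p g) * ((-1) ^ #(univ \ t) * σ • ∏ g ∈ univ \ t, g • p g) := by
  simp_rw [sub_eq_add_neg, prod_add, prod_neg, smul_prod', mul_smul]

theorem sum_powerset_mul_sum_smul_eq_zero [DecidableEq G] (p : G → A) :
    ∑ t ∈ univ.powerset,
      (∏ g ∈ t, p g) * ((-1) ^ #(univ \ t) * ∑ σ : G, σ • ∏ g ∈ univ \ t, g • p g) = 0 := by
  rw [← sum_prod_sub_smul_eq_zero p, sum_congr rfl fun σ _ ↦ prod_sub_smul_eq_sum_powerset p σ,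
    sum_comm]
  simp_rw [mul_sum]

theorem card_mul_prod_mem_span_invariants {I : Ideal A} (hI : ∀ g : G, ∀ a ∈ I, g • a ∈ I)
    (p : G → A) (hp : ∀ g, p g ∈ I) :
    (Fintype.card G : A) * ∏ g, p g ∈ Ideal.span {a | (∀ g : G, g • a = a) ∧ a ∈ I} := by
  classical
  have htrace : ∀ t ∈ (univ : Finset G).powerset.erase univ,
      ∑ σ : G, σ • ∏ g ∈ univ \ t, g • p g ∈ {a | (∀ g : G, g • a = a) ∧ a ∈ I} := by
    intro t ht
    obtain ⟨g₀, hg₀⟩ : (univ \ t).Nonempty := by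
      simpa [sdiff_nonempty, ← eq_univ_iff_forall] using ne_of_mem_erase ht
    refine ⟨fun τ ↦ smul_sum_smul τ _, I.sum_mem fun σ _ ↦ hI σ _ ?_⟩
    exact I.prod_mem hg₀ (hI g₀ _ (hp g₀))
  have key := sum_powerset_mul_sum_smul_eq_zero p
  rw [← add_sum_erase _ _ (mem_powerset_self univ)] at key
  have hfull : (∏ g, p g) *
      ((-1) ^ #(univ \ (univ : Finset G)) * ∑ σ : G, σ • ∏ g ∈ univ \ univ, g • p g) =
      (Fintype.card G : A) * ∏ g, p g := by
    simp [mul_comm]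
  rw [← hfull, eq_neg_of_add_eq_zero_left key]
  exact neg_mem <| Ideal.sum_mem _ fun t ht ↦
    Ideal.mul_mem_left _ _ <| Ideal.mul_mem_left _ _ <| Ideal.subset_span (htrace t ht)

theorem prod_mem_span_invariants {I : Ideal A} (hI : ∀ g : G, ∀ a ∈ I, g • a ∈ I)
    (hG : IsUnit (Fintype.card G : A)) (p : G → A) (hp : ∀ g, p g ∈ I) :
    ∏ g, p g ∈ Ideal.span {a | (∀ g : G, g • a = a) ∧ a ∈ I} :=
  (Ideal.unit_mul_mem_iff_mem _ hG).mp (card_mul_prod_mem_span_invariants hI p hp)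

end Transfer

/-- For a finite group `G` acting on `R = K[x₁,…,xₙ]` by linear
transformations of the variables, with `|G|` invertible in `K`, any product of `|G|`
polynomials with zero constant term lies in the Hilbert ideal `H = R·R^G₊`;
in particular, every monomial of degree `|G|` lies in `H`. -/
theorem stmt1 {K : Type*} [Field K] {n : ℕ} {G : Type*} [Group G] [Fintype G]
    (ρ : G →* (MvPolynomial (Fin n) K ≃ₐ[K] MvPolynomial (Fin n) K))
    (hlin : ∀ (σ : G) (i : Fin n), (ρ σ (X i)).IsHomogeneous 1)
    (hcard : (Fintype.card G : K) ≠ 0) :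
    (∀ p : G → MvPolynomial (Fin n) K, (∀ σ, constantCoeff (p σ) = 0) →
      (∏ σ : G, p σ) ∈ Ideal.span {g : MvPolynomial (Fin n) K |
        (∀ σ, ρ σ g = g) ∧ constantCoeff g = 0}) ∧
    (∀ d : Fin n →₀ ℕ, (d.sum fun _ k => k) = Fintype.card G →
      (monomial d (1 : K)) ∈ Ideal.span {g : MvPolynomial (Fin n) K |
        (∀ σ, ρ σ g = g) ∧ constantCoeff g = 0}) := by
  let _ : MulSemiringAction G (MvPolynomial (Fin n) K) := MulSemiringAction.compHom _ ρ
  have hstable : ∀ σ : G, ∀ f ∈ RingHom.ker (constantCoeff (σ := Fin n) (R := K)),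
      σ • f ∈ RingHom.ker constantCoeff := fun σ f hf ↦
    (constantCoeff_algHom_apply (ρ σ).toAlgHom
      (fun i ↦ (hlin σ i).coeff_eq_zero (d := 0) (by simp)) f).trans hf
  have hunit : IsUnit (Fintype.card G : MvPolynomial (Fin n) K) := by
    simpa using (isUnit_iff_ne_zero.mpr hcard).map C
  refine ⟨prod_mem_span_invariants hstable hunit, fun d hd ↦ ?_⟩
  obtain ⟨p, hpX, hp⟩ := Multiset.exists_prod_univ_eq_prod (ι := G)
    (d.toMultiset.map (X : Fin n → MvPolynomial (Fin n) K))
    (by rw [Multiset.card_map, Finsupp.card_toMultiset]; exact hd)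
  rw [← prod_toMultiset_map_X, ← hp]
  refine prod_mem_span_invariants hstable hunit p fun σ ↦ ?_
  obtain ⟨i, -, hi⟩ := Multiset.mem_map.mp (hpX σ)
  rw [RingHom.mem_ker, ← hi, constantCoeff_X]
end

section
/- (Noether's degree bound) Let G be a finite group acting on R = K[x_1,...,x_n] by linear transformations of the variables, with |G| invertible in K. Then the invariant ring R^G is generated as a K-algebra by the homogeneous invariants of degree at most |G|. -/
/-!
Let `Tr = ∑ σ, ρ σ` be the transfer. As `|G|` is invertible, `|G| • x = Tr x` shows that every
invariant is a sum of transfers of homogeneous polynomials, so it suffices to show that `Tr f`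
lies in the algebra generated by the low-degree invariants for `f` homogeneous of degree `d`.
For `d > |G|` write `f` as a combination of products `b * ∏ σ, a σ` with linear forms `a σ`.
For every `τ` the product `∏ σ, (ρ τ (a σ) - ρ σ (a σ))` vanishes (its factor at `σ = τ` is zero);
expanding it and applying `Tr` twice (Benson) writes `|G| • Tr (b * ∏ σ, a σ)` as a combination
of `Tr (∏ σ ∈ S, -ρ σ (a σ)) * Tr (b * ∏ σ ∉ S, a σ)` with `S ≠ ∅`: an invariant of degree
`#S ≤ |G|` times the transfer of a polynomial of degree `d - #S < d`, so induction on `d` applies.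
-/

open MvPolynomial Finset

theorem MvPolynomial.IsHomogeneous.algHom_apply {σ τ R : Type*} [CommSemiring R]
    {f : MvPolynomial σ R} {d : ℕ} (hf : f.IsHomogeneous d)
    (φ : MvPolynomial σ R →ₐ[R] MvPolynomial τ R) (hφ : ∀ i, (φ (X i)).IsHomogeneous 1) :
    (φ f).IsHomogeneous d := by
  simpa [← aeval_unique] using hf.aeval (φ ∘ X) hφ

theorem Subalgebra.mem_of_nsmul_mem {K A : Type*} [Field K] [Ring A] [Algebra K A]
    (S : Subalgebra K A) {k : ℕ} (hk : (k : K) ≠ 0) {x : A} (hx : k • x ∈ S) : x ∈ S := by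
  simpa [← Nat.cast_smul_eq_nsmul K, smul_smul, hk] using S.smul_mem hx (k : K)⁻¹

namespace NoetherBound

section Transfer

variable {K A G : Type*} [CommSemiring K] [CommRing A] [Algebra K A] [Group G] [Fintype G]
  (ρ : G →* (A ≃ₐ[K] A))

noncomputable def transfer : A →ₗ[K] A :=
  ∑ σ, (ρ σ).toLinearMap

theorem transfer_apply (x : A) : transfer ρ x = ∑ σ, ρ σ x := by
  simp [transfer]

theorem apply_transfer (τ : G) (x : A) : ρ τ (transfer ρ x) = transfer ρ x := by
  simp only [transfer_apply, map_sum, ← AlgEquiv.mul_apply, ← map_mul]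
  exact Fintype.sum_bijective _ (Group.mulLeft_bijective τ) _ _ fun _ => rfl

theorem transfer_mul_of_invariant {g : A} (hg : ∀ σ, ρ σ g = g) (x : A) :
    transfer ρ (x * g) = transfer ρ x * g := by
  simp only [transfer_apply, map_mul, hg, sum_mul]

theorem transfer_eq_card_smul {x : A} (hx : ∀ σ, ρ σ x = x) :
    transfer ρ x = Fintype.card G • x := by
  simp [transfer_apply, hx]

theorem sum_powerset_prod_neg_mul_transfer [DecidableEq G] (a : G → A) (b : A) :
    ∑ S ∈ univ.powerset, (∏ σ ∈ S, -ρ σ (a σ)) * transfer ρ (b * ∏ σ ∈ univ \ S, a σ) = 0 := by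
  calc _ = ∑ τ, ρ τ b *
          ∑ S ∈ univ.powerset, (∏ σ ∈ S, -ρ σ (a σ)) * ∏ σ ∈ univ \ S, ρ τ (a σ) := by
        simp only [transfer_apply, map_mul, map_prod, mul_sum]
        rw [sum_comm]
        exact sum_congr rfl fun τ _ => sum_congr rfl fun S _ => by ring
    _ = ∑ τ, ρ τ b * ∏ σ, (-ρ σ (a σ) + ρ τ (a σ)) := by simp only [prod_add]
    _ = 0 := sum_eq_zero fun τ _ => by
        rw [prod_eq_zero (mem_univ τ) (neg_add_cancel _), mul_zero]

theorem card_smul_transfer_mul_prod [DecidableEq G] (a : G → A) (b : A) :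
    Fintype.card G • transfer ρ (b * ∏ σ, a σ) =
      -∑ S ∈ univ.powerset.erase ∅,
        transfer ρ (∏ σ ∈ S, -ρ σ (a σ)) * transfer ρ (b * ∏ σ ∈ univ \ S, a σ) := by
  have h := sum_powerset_prod_neg_mul_transfer ρ a b
  rw [← add_sum_erase _ _ (empty_mem_powerset _), prod_empty, one_mul, sdiff_empty,
    ← eq_neg_iff_add_eq_zero] at h
  rw [← transfer_eq_card_smul ρ (apply_transfer ρ · _), h, map_neg, map_sum]
  simp only [transfer_mul_of_invariant ρ (apply_transfer ρ · _)]

end Transfer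

section Noether

variable {K ι G : Type*} [Field K] [Group G] [Fintype G]
  (ρ : G →* (MvPolynomial ι K ≃ₐ[K] MvPolynomial ι K))

def lowDegreeInvariants : Set (MvPolynomial ι K) :=
  {g | (∀ σ, ρ σ g = g) ∧ ∃ d ≤ Fintype.card G, g.IsHomogeneous d}

variable {ρ} (hlin : ∀ σ i, (ρ σ (X i)).IsHomogeneous 1)
include hlin

theorem isHomogeneous_transfer {f : MvPolynomial ι K} {d : ℕ} (hf : f.IsHomogeneous d) :
    (transfer ρ f).IsHomogeneous d := by
  rw [transfer_apply]
  exact IsHomogeneous.sum _ _ _ fun σ _ => hf.algHom_apply (ρ σ).toAlgHom (hlin σ)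

theorem transfer_mem_lowDegreeInvariants {f : MvPolynomial ι K} {d : ℕ} (hf : f.IsHomogeneous d)
    (hd : d ≤ Fintype.card G) : transfer ρ f ∈ lowDegreeInvariants ρ :=
  ⟨(apply_transfer ρ · f), d, hd, isHomogeneous_transfer hlin hf⟩

theorem transfer_mul_prod_mem_adjoin (hcard : (Fintype.card G : K) ≠ 0) {k : ℕ}
    (ih : ∀ e < k + Fintype.card G, ∀ f : MvPolynomial ι K, f.IsHomogeneous e →
      transfer ρ f ∈ Algebra.adjoin K (lowDegreeInvariants ρ))
    {b : MvPolynomial ι K} (hb : b.IsHomogeneous k)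
    {a : G → MvPolynomial ι K} (ha : ∀ σ, (a σ).IsHomogeneous 1) :
    transfer ρ (b * ∏ σ, a σ) ∈ Algebra.adjoin K (lowDegreeInvariants ρ) := by
  classical
  refine Subalgebra.mem_of_nsmul_mem _ hcard ?_
  rw [card_smul_transfer_mul_prod]
  refine neg_mem (sum_mem fun S hS => ?_)
  have hS₀ : 0 < #S := card_pos.2 (nonempty_iff_ne_empty.2 (ne_of_mem_erase hS))
  have hSG : #S ≤ Fintype.card G := card_le_univ S
  refine mul_mem (Algebra.subset_adjoin (transfer_mem_lowDegreeInvariants hlin ?_ hSG))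
    (ih (k + (Fintype.card G - #S)) (by omega) _ ?_)
  · simpa using IsHomogeneous.prod S _ (fun _ => 1) fun σ _ =>
      ((ha σ).algHom_apply (ρ σ).toAlgHom (hlin σ)).neg
  · convert hb.mul (IsHomogeneous.prod (univ \ S) a (fun _ => 1) fun σ _ => ha σ) using 1
    rw [sum_const, smul_eq_mul, mul_one, card_univ_sdiff]

theorem transfer_mem_adjoin (hcard : (Fintype.card G : K) ≠ 0) {d : ℕ} {f : MvPolynomial ι K}
    (hf : f.IsHomogeneous d) : transfer ρ f ∈ Algebra.adjoin K (lowDegreeInvariants ρ) := by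
  induction d using Nat.strong_induction_on generalizing f with | _ d ih => ?_
  obtain hd | hd := le_total d (Fintype.card G)
  · exact Algebra.subset_adjoin (transfer_mem_lowDegreeInvariants hlin hf hd)
  obtain ⟨k, rfl⟩ := Nat.exists_eq_add_of_le' hd
  suffices homogeneousSubmodule ι K k * homogeneousSubmodule ι K 1 ^ Fintype.card G ≤
      (Subalgebra.toSubmodule (Algebra.adjoin K (lowDegreeInvariants ρ))).comap (transfer ρ) by
    rw [← homogeneousSubmodule_one_pow K k, ← pow_add, homogeneousSubmodule_one_pow] at this
    exact this hf
  refine Submodule.mul_le.2 fun b hb c hc => ?_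
  rw [Submodule.pow_eq_span_pow_set] at hc
  refine Submodule.span_le (p := (Subalgebra.toSubmodule _).comap
    (transfer ρ ∘ₗ LinearMap.mulLeft K b)).2 (fun _ ha => ?_) hc
  obtain ⟨a, rfl⟩ := Set.mem_pow.1 ha
  show transfer ρ (b * _) ∈ Algebra.adjoin K _
  rw [List.prod_ofFn, ← (Fintype.equivFin G).prod_comp]
  exact transfer_mul_prod_mem_adjoin hlin hcard ih hb fun σ => (a _).2

end Noether

end NoetherBound

open NoetherBound in
/-- **Noether's degree bound.** For a finite group `G` acting on
`R = K[x₁,…,xₙ]` by linear transformations of the variables, with `|G|` invertible in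
`K`, the invariant ring `R^G` is generated as a `K`-algebra by the homogeneous
invariants of degree at most `|G|`. -/
theorem stmt2 {K : Type*} [Field K] {n : ℕ} {G : Type*} [Group G] [Fintype G]
    (ρ : G →* (MvPolynomial (Fin n) K ≃ₐ[K] MvPolynomial (Fin n) K))
    (hlin : ∀ (σ : G) (i : Fin n), (ρ σ (X i)).IsHomogeneous 1)
    (hcard : (Fintype.card G : K) ≠ 0) :
    ∀ x : MvPolynomial (Fin n) K,
      (∀ σ, ρ σ x = x) ↔
      x ∈ Algebra.adjoin K {g : MvPolynomial (Fin n) K |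
        (∀ σ, ρ σ g = g) ∧ ∃ d ≤ Fintype.card G, g.IsHomogeneous d} := by
  refine fun x => ⟨fun hx => ?_, fun hx => ?_⟩
  · refine Subalgebra.mem_of_nsmul_mem _ hcard ?_
    rw [← transfer_eq_card_smul ρ hx, ← sum_homogeneousComponent x, map_sum]
    exact sum_mem fun d _ => transfer_mem_adjoin hlin hcard (homogeneousComponent_isHomogeneous d x)
  · exact fun σ => AlgHom.adjoin_le_equalizer (ρ σ).toAlgHom (AlgHom.id K _)
      (fun g hg => hg.1 σ) hx
end

section
/- Let G be a finite group acting linearly on V = K^n over an algebraically closed field K of characteristic p > 0, let N ⊂ G be a normal subgroup of index p, and let I_{G/N} ⊆ R^G be the image of the relative trace Tr_{G/N}: R^N → R^G. Then the vanishing set of I_{G/N} in V equals the union of the fixed spaces V^σ over all σ ∈ G \ N. -/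
/-!
If some `σ ∉ N` fixes `v`, then `G = ⟨σ⟩ N` and every `N`-invariant `h` takes the same
value at all points `τ⁻ʲ v`, so `Tr_{G/N}(h)(v) = p · h(v) = 0`.

Conversely, if the stabilizer of `v` lies in `N`, the points `ν v` (`ν ∈ N`) and `g v`
(`g ∉ N`) are distinct. Interpolation gives `h₀` equal to `1` on the former and `0` on the
latter; its `N`-norm `h = ∏_{ν ∈ N} ν(h₀)` is `N`-invariant, and for any `τ ∉ N` only the
summand `j = 0` of `Tr_{G/N}(h)(v) = ∑_{j<p} h(τ⁻ʲ v)` survives, and it equals `1`.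
-/

open MvPolynomial Finset

namespace MvPolynomial

variable {K ι : Type*} [Field K]

theorem exists_eval_eq_one_eval_eq_zero {u w : ι → K} (h : u ≠ w) :
    ∃ ℓ : MvPolynomial ι K, eval w ℓ = 1 ∧ eval u ℓ = 0 := by
  obtain ⟨i, hi⟩ := Function.ne_iff.mp h
  refine ⟨C (w i - u i)⁻¹ * (X i - C (u i)), ?_, by simp⟩
  simpa using inv_mul_cancel₀ (sub_ne_zero.mpr (Ne.symm hi))

theorem exists_eval_eq_one_forall_eval_eq_zero {w : ι → K} {S : Finset (ι → K)} (hw : w ∉ S) :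
    ∃ e : MvPolynomial ι K, eval w e = 1 ∧ ∀ s ∈ S, eval s e = 0 := by
  choose! ℓ hℓw hℓs using fun (s : ι → K) (h : s ≠ w) => exists_eval_eq_one_eval_eq_zero h
  have hne : ∀ s ∈ S, s ≠ w := fun s hs hsw => hw (hsw ▸ hs)
  refine ⟨∏ s ∈ S, ℓ s, ?_, fun s hs => ?_⟩
  · rw [map_prod]
    exact prod_eq_one fun s hs => hℓw s (hne s hs)
  · rw [map_prod]
    exact prod_eq_zero hs (hℓs s (hne s hs))

theorem exists_eval_eq_one_on_eval_eq_zero_on [DecidableEq (ι → K)] {T S : Finset (ι → K)}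
    (hTS : Disjoint T S) :
    ∃ f : MvPolynomial ι K, (∀ t ∈ T, eval t f = 1) ∧ ∀ s ∈ S, eval s f = 0 := by
  choose e he1 he0 using fun t : ι → K =>
    exists_eval_eq_one_forall_eval_eq_zero (notMem_erase t (T ∪ S))
  refine ⟨∑ t ∈ T, e t, fun t ht => ?_, fun s hs => ?_⟩
  · rw [map_sum, sum_eq_single_of_mem t ht fun t' ht' hne => he0 t' t (by simp [ht, Ne.symm hne])]
    exact he1 t
  · rw [map_sum]
    refine sum_eq_zero fun t ht => he0 t s ?_
    exact mem_erase.mpr ⟨fun hst => disjoint_left.mp hTS ht (hst ▸ hs), mem_union_right T hs⟩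

end MvPolynomial

namespace Subgroup

variable {G : Type*} [Group G] {p : ℕ} [Fact p.Prime] {N : Subgroup G} [N.Normal]

theorem zpowers_mk_eq_top_of_index_eq_prime (hidx : N.index = p) {σ : G} (hσ : σ ∉ N) :
    zpowers (σ : G ⧸ N) = ⊤ :=
  zpowers_eq_top_of_prime_card hidx (by rwa [Ne, QuotientGroup.eq_one_iff])

theorem pow_notMem_of_index_eq_prime (hidx : N.index = p) {τ : G} (hτ : τ ∉ N) {j : ℕ}
    (hj0 : j ≠ 0) (hjp : j < p) : τ ^ j ∉ N := by
  have hτ' : (τ : G ⧸ N) ≠ 1 := by rwa [Ne, QuotientGroup.eq_one_iff]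
  have horder : orderOf (τ : G ⧸ N) = p :=
    orderOf_eq_prime (hidx ▸ pow_card_eq_one') hτ'
  rw [← QuotientGroup.eq_one_iff, QuotientGroup.mk_pow]
  exact pow_ne_one_of_lt_orderOf hj0 (horder ▸ hjp)

theorem exists_mem_inv_mul_mem_of_index_eq_prime (hidx : N.index = p) {H : Subgroup G} {σ : G}
    (hσH : σ ∈ H) (hσN : σ ∉ N) (g : G) : ∃ s ∈ H, s⁻¹ * g ∈ N := by
  obtain ⟨m, hm⟩ : (g : G ⧸ N) ∈ zpowers (σ : G ⧸ N) :=
    zpowers_mk_eq_top_of_index_eq_prime hidx hσN ▸ mem_top _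
  refine ⟨σ ^ m, zpow_mem hσH m, QuotientGroup.eq.mp ?_⟩
  simpa [QuotientGroup.mk_zpow] using hm

end Subgroup

section RelativeTrace

variable {K ι G : Type*} [Field K] [Group G]
  (ρ : G →* (MvPolynomial ι K ≃ₐ[K] MvPolynomial ι K)) (π : G →* ((ι → K) ≃ₗ[K] (ι → K)))

def pointStabilizer (v : ι → K) : Subgroup G :=
  (MulAction.stabilizer ((ι → K) ≃ₗ[K] (ι → K)) v).comap π

theorem mem_pointStabilizer {v : ι → K} {g : G} : g ∈ pointStabilizer π v ↔ π g v = v :=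
  MulAction.mem_stabilizer_iff

noncomputable def subgroupNorm (N : Subgroup G) [Fintype N] (f : MvPolynomial ι K) :
    MvPolynomial ι K :=
  ∏ ν : N, ρ ν f

theorem map_subgroupNorm_of_mem {N : Subgroup G} [Fintype N] (f : MvPolynomial ι K) {μ : G}
    (hμ : μ ∈ N) : ρ μ (subgroupNorm ρ N f) = subgroupNorm ρ N f := by
  rw [subgroupNorm, map_prod]
  exact Fintype.prod_equiv (Equiv.mulLeft ⟨μ, hμ⟩) _ _ fun ν => by simp [AlgEquiv.mul_apply]

variable {ρ π}
variable
  (hcompat : ∀ (σ : G) (f : MvPolynomial ι K) (v : ι → K), eval v (ρ σ f) = eval (π σ⁻¹ v) f)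
include hcompat

theorem eval_map_subgroupNorm {N : Subgroup G} [Fintype N] (f : MvPolynomial ι K) (g : G)
    (v : ι → K) : eval v (ρ g (subgroupNorm ρ N f)) = ∏ ν : N, eval (π (g * ν)⁻¹ v) f := by
  rw [subgroupNorm, map_prod, map_prod]
  exact prod_congr rfl fun ν _ => by rw [← AlgEquiv.mul_apply, ← map_mul, hcompat]

theorem eval_relTrace_eq_zero {p : ℕ} [Fact p.Prime] [CharP K p] {N : Subgroup G} [N.Normal]
    (hidx : N.index = p) {v : ι → K} {σ : G} (hσN : σ ∉ N) (hσv : π σ v = v)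
    {h : MvPolynomial ι K} (hh : ∀ ν ∈ N, ρ ν h = h) (τ : G) :
    eval v (∑ j ∈ range p, ρ (τ ^ j) h) = 0 := by
  have hconst : ∀ g : G, eval v (ρ g h) = eval v h := by
    intro g
    obtain ⟨s, hs, hsg⟩ := Subgroup.exists_mem_inv_mul_mem_of_index_eq_prime hidx
      ((mem_pointStabilizer π).mpr hσv) hσN g
    calc eval v (ρ g h) = eval v (ρ s (ρ (s⁻¹ * g) h)) := by
          rw [← AlgEquiv.mul_apply, ← map_mul, mul_inv_cancel_left]
      _ = eval v h := by
          rw [hh _ hsg, hcompat, (mem_pointStabilizer π).mp (inv_mem hs)]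
  rw [map_sum, sum_congr rfl fun j _ => hconst (τ ^ j), sum_const, card_range, nsmul_eq_mul,
    CharP.cast_eq_zero, zero_mul]

theorem exists_eval_relTrace_ne_zero [Fintype G] {p : ℕ} [Fact p.Prime] {N : Subgroup G}
    [N.Normal] (hidx : N.index = p) {v : ι → K} (hv : pointStabilizer π v ≤ N) :
    ∃ τ ∉ N, ∃ h : MvPolynomial ι K, (∀ ν ∈ N, ρ ν h = h) ∧
      eval v (∑ j ∈ range p, ρ (τ ^ j) h) ≠ 0 := by
  classical
  have hp : p.Prime := Fact.out
  obtain ⟨τ, hτ⟩ := SetLike.exists_not_mem_of_ne_top N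
    (fun hN => hp.ne_one (hidx ▸ Subgroup.index_eq_one.mpr hN))
  set T := univ.image fun ν : N => π ν v
  set S := (univ.filter (· ∉ N)).image fun g : G => π g v
  have hTS : Disjoint T S := by
    simp only [T, S, disjoint_left, mem_image, mem_univ, true_and, mem_filter,
      forall_exists_index, forall_apply_eq_imp_iff]
    rintro ν ⟨g, hgN, hgν⟩
    have hfix : ν⁻¹ * g ∈ pointStabilizer π v := by
      rw [mem_pointStabilizer, map_mul, LinearEquiv.mul_apply, hgν, ← LinearEquiv.mul_apply,
        ← map_mul]
      simp
    exact hgN (by simpa using N.mul_mem ν.2 (hv hfix))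
  obtain ⟨h₀, hT, hS⟩ := exists_eval_eq_one_on_eval_eq_zero_on hTS
  refine ⟨τ, hτ, subgroupNorm ρ N h₀, fun μ hμ => map_subgroupNorm_of_mem ρ h₀ hμ, ?_⟩
  have hzero : ∀ j ∈ range p, j ≠ 0 → eval v (ρ (τ ^ j) (subgroupNorm ρ N h₀)) = 0 := by
    intro j hj hj0
    rw [eval_map_subgroupNorm hcompat]
    refine prod_eq_zero (mem_univ 1) (hS _ (mem_image.mpr ⟨_, ?_, rfl⟩))
    simpa using Subgroup.pow_notMem_of_index_eq_prime hidx hτ hj0 (mem_range.mp hj)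
  rw [map_sum, sum_eq_single_of_mem 0 (mem_range.mpr hp.pos) hzero, pow_zero,
    eval_map_subgroupNorm hcompat, prod_eq_one fun ν _ => hT _ ?_]
  · exact one_ne_zero
  · exact mem_image.mpr ⟨ν⁻¹, mem_univ _, by simp⟩

end RelativeTrace

theorem stmt5_general {K : Type*} [Field K] {n : ℕ} {p : ℕ} [Fact p.Prime]
    [CharP K p] {G : Type*} [Group G] [Fintype G]
    (ρ : G →* (MvPolynomial (Fin n) K ≃ₐ[K] MvPolynomial (Fin n) K))
    (π : G →* ((Fin n → K) ≃ₗ[K] (Fin n → K)))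
    (hcompat : ∀ (σ : G) (f : MvPolynomial (Fin n) K) (v : Fin n → K),
      eval v (ρ σ f) = eval (π σ⁻¹ v) f)
    (N : Subgroup G) [N.Normal] (hidx : N.index = p) :
    {v : Fin n → K | ∀ f : MvPolynomial (Fin n) K,
        (∃ τ, τ ∉ N ∧ ∃ h, (∀ ν ∈ N, ρ ν h = h) ∧
          f = ∑ j ∈ Finset.range p, ρ (τ ^ j) h) →
        eval v f = 0} =
      {v : Fin n → K | ∃ σ, σ ∉ N ∧ π σ v = v} := by
  ext v
  simp only [Set.mem_ofPred_eq]
  constructor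
  · intro hv
    by_contra! hfree
    have hstab : pointStabilizer π v ≤ N := fun g hg =>
      not_not.mp fun hgN => hfree g hgN ((mem_pointStabilizer π).mp hg)
    obtain ⟨τ, hτ, h, hh, hne⟩ := exists_eval_relTrace_ne_zero hcompat hidx hstab
    exact hne (hv _ ⟨τ, hτ, h, hh, rfl⟩)
  · rintro ⟨σ, hσN, hσv⟩ f ⟨τ, -, h, hh, rfl⟩
    exact eval_relTrace_eq_zero hcompat hidx hσN hσv hh τ

/-- Let `G` be a finite group acting linearly on `V = Kⁿ`, `K`
algebraically closed of characteristic `p`, and `N ⊴ G` of index `p`. The vanishing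
set in `V` of the image `I_{G/N}` of the relative trace `Tr_{G/N} : R^N → R^G`
(given by `h ↦ ∑_{j<p} σʲ(h)` for any `σ ∉ N`) equals the union of the fixed spaces
`V^σ` over `σ ∈ G \ N`. -/
theorem stmt5 {K : Type*} [Field K] [IsAlgClosed K] {n : ℕ} {p : ℕ} [Fact p.Prime]
    [CharP K p] {G : Type*} [Group G] [Fintype G]
    (ρ : G →* (MvPolynomial (Fin n) K ≃ₐ[K] MvPolynomial (Fin n) K))
    (hlin : ∀ (σ : G) (i : Fin n), (ρ σ (X i)).IsHomogeneous 1)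
    (π : G →* ((Fin n → K) ≃ₗ[K] (Fin n → K)))
    (hcompat : ∀ (σ : G) (f : MvPolynomial (Fin n) K) (v : Fin n → K),
      eval v (ρ σ f) = eval (π σ⁻¹ v) f)
    (N : Subgroup G) [N.Normal] (hidx : N.index = p) :
    {v : Fin n → K | ∀ f : MvPolynomial (Fin n) K,
        (∃ τ, τ ∉ N ∧ ∃ h, (∀ ν ∈ N, ρ ν h = h) ∧
          f = ∑ j ∈ Finset.range p, ρ (τ ^ j) h) →
        eval v f = 0} =
      {v : Fin n → K | ∃ σ, σ ∉ N ∧ π σ v = v} :=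
  stmt5_general ρ π hcompat N hidx
end

section
/- Let R = K[x_1,...,x_n] with a finite group G acting linearly, K algebraically closed, and suppose f_1, f_2, f_3 ∈ R^G and g_1, g_2, g_3 ∈ R satisfy f_i = σ(g_i) − g_i for a fixed K-algebra automorphism σ of R arising from the group action. Assume f_1, f_2, f_3 form a regular sequence in R. Then the elements u_{ij} := f_i g_j − f_j g_i satisfy f_1 u_{23} − f_2 u_{13} + f_3 u_{12} = 0, and if moreover each u_{ij} lies in R^G, the sequence f_1, f_2, f_3 is not a regular sequence in R^G. -/
/-! The Koszul relation `f₀ u₁₂ - f₁ u₀₂ + f₂ u₀₁ = 0` puts `f₂ u₀₁` into `(f₀, f₁)`. If the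
`u_{ij}` are invariant and `f₂` is regular modulo `(f₀, f₁)` in `R^G`, then `u₀₁ = a f₀ + b f₁`
with `a, b` invariant. Then `f₁ (g₀ + b) ∈ (f₀)`, so regularity of `f₁` over `R` gives
`g₀ + b = f₀ c`; applying `σ` and subtracting yields `f₀ (σ c - c - 1) = 0`, hence `σ c - c = 1`,
which is impossible for a degree-preserving `σ` since it fixes constant terms. -/

open MvPolynomial

/-- The invariant subalgebra of a group action on a polynomial ring by
`K`-algebra automorphisms. -/
def invAlg {K : Type*} [CommRing K] {n : ℕ} {G : Type*} [Group G]
    (ρ : G →* (MvPolynomial (Fin n) K ≃ₐ[K] MvPolynomial (Fin n) K)) :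
    Subalgebra K (MvPolynomial (Fin n) K) where
  carrier := {f | ∀ σ, ρ σ f = f}
  mul_mem' := by intro a b ha hb σ; simp [map_mul, ha σ, hb σ]
  add_mem' := by intro a b ha hb σ; simp [map_add, ha σ, hb σ]
  algebraMap_mem' := by intro r σ; simpa using (ρ σ).commutes r

section SpanImage

variable {A : Type*} [CommSemiring A] (v : Fin 3 → A)

theorem Ideal.span_image_fin_lt_one : Ideal.span (v '' {j | j < 1}) = Ideal.span {v 0} := by
  have : {j : Fin 3 | j < 1} = {0} := by
    ext j; fin_cases j <;> simp
  rw [this, Set.image_singleton]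

theorem Ideal.span_image_fin_lt_two : Ideal.span (v '' {j | j < 2}) = Ideal.span {v 0, v 1} := by
  have : {j : Fin 3 | j < 2} = {0, 1} := by
    ext j; fin_cases j <;> simp
  rw [this, Set.image_pair]

end SpanImage

theorem mul_mem_span_pair_of_koszul {A : Type*} [CommRing A] {f₀ f₁ f₂ u₀₁ u₀₂ u₁₂ : A}
    (h : f₀ * u₁₂ - f₁ * u₀₂ + f₂ * u₀₁ = 0) : f₂ * u₀₁ ∈ Ideal.span {f₀, f₁} :=
  Ideal.mem_span_pair.2 ⟨-u₁₂, u₀₂, by linear_combination -h⟩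

theorem exists_apply_sub_self_eq_one {R F : Type*} [CommRing R] [FunLike F R R]
    [RingHomClass F R R] (τ : F) {f₀ f₁ g₀ g₁ a b : R} (hf₀ : f₀ ∈ nonZeroDivisors R)
    (hf₁ : ∀ x, f₁ * x ∈ Ideal.span {f₀} → x ∈ Ideal.span {f₀})
    (hτf₀ : τ f₀ = f₀) (hg₀ : f₀ = τ g₀ - g₀) (hτb : τ b = b)
    (hu : f₀ * g₁ - f₁ * g₀ = a * f₀ + b * f₁) : ∃ c, τ c - c = 1 := by
  obtain ⟨c, hc⟩ : f₀ ∣ g₀ + b := Ideal.mem_span_singleton.1 <|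
    hf₁ _ (Ideal.mem_span_singleton.2 ⟨g₁ - a, by linear_combination -hu⟩)
  have hτc : τ g₀ + b = f₀ * τ c := by
    simpa only [map_add, map_mul, hτb, hτf₀] using congrArg τ hc
  refine ⟨c, sub_eq_zero.1 ?_⟩
  exact (mul_left_mem_nonZeroDivisors_eq_zero_iff hf₀).1 (by linear_combination hc - hτc - hg₀)

section ConstantCoeff

variable {R ι F : Type*} [CommRing R] [FunLike F (MvPolynomial ι R) (MvPolynomial ι R)]
  [AlgHomClass F R (MvPolynomial ι R) (MvPolynomial ι R)] (τ : F)

theorem MvPolynomial.constantCoeff_map_eq_of_constantCoeff_X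
    (hτ : ∀ i, constantCoeff (τ (X i)) = 0) (p : MvPolynomial ι R) :
    constantCoeff (τ p) = constantCoeff p := by
  induction p using MvPolynomial.induction_on with
  | C r => rw [← algebraMap_eq, AlgHomClass.commutes]
  | add p q hp hq => simp only [map_add, hp, hq]
  | mul_X p i hp => simp only [map_mul, hp, hτ, constantCoeff_X]

theorem MvPolynomial.apply_sub_self_ne_one_of_constantCoeff_X [Nontrivial R]
    (hτ : ∀ i, constantCoeff (τ (X i)) = 0) (c : MvPolynomial ι R) : τ c - c ≠ 1 := by
  intro h
  simpa [constantCoeff_map_eq_of_constantCoeff_X τ hτ] using congrArg constantCoeff h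

end ConstantCoeff

theorem stmt6_general {K : Type*} [Field K] {n : ℕ} {G : Type*} [Group G]
    (ρ : G →* (MvPolynomial (Fin n) K ≃ₐ[K] MvPolynomial (Fin n) K))
    (hlin : ∀ (σ : G) (i : Fin n), (ρ σ (X i)).IsHomogeneous 1)
    (σ : G) (f g : Fin 3 → MvPolynomial (Fin n) K)
    (hfG : ∀ i, f i ∈ invAlg ρ)
    (hfg : ∀ i, f i = ρ σ (g i) - g i)
    (hreg : ∀ (i : Fin 3) (x : MvPolynomial (Fin n) K),
      f i * x ∈ Ideal.span (f '' {j | j < i}) → x ∈ Ideal.span (f '' {j | j < i})) :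
    f 0 * (f 1 * g 2 - f 2 * g 1) - f 1 * (f 0 * g 2 - f 2 * g 0)
        + f 2 * (f 0 * g 1 - f 1 * g 0) = 0 ∧
    ((∀ i j, f i * g j - f j * g i ∈ invAlg ρ) →
      ¬ (∀ (i : Fin 3) (x : invAlg ρ),
          (⟨f i, hfG i⟩ : invAlg ρ) * x ∈
            Ideal.span ((fun j => (⟨f j, hfG j⟩ : invAlg ρ)) '' {j | j < i}) →
          x ∈ Ideal.span ((fun j => (⟨f j, hfG j⟩ : invAlg ρ)) '' {j | j < i}))) := by
  have hkoszul : f 0 * (f 1 * g 2 - f 2 * g 1) - f 1 * (f 0 * g 2 - f 2 * g 0)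
      + f 2 * (f 0 * g 1 - f 1 * g 0) = 0 := by ring
  refine ⟨hkoszul, fun hu hregG => ?_⟩
  have hmem := hregG 2 ⟨_, hu 0 1⟩ <| by
    rw [Ideal.span_image_fin_lt_two]
    exact mul_mem_span_pair_of_koszul (u₁₂ := ⟨_, hu 1 2⟩) (u₀₂ := ⟨_, hu 0 2⟩)
      (Subtype.ext hkoszul)
  rw [Ideal.span_image_fin_lt_two] at hmem
  obtain ⟨a, b, hab⟩ := Ideal.mem_span_pair.1 hmem
  have hf₀ : f 0 ∈ nonZeroDivisors _ := mem_nonZeroDivisors_iff_left.2 fun x hx => by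
    simpa using hreg 0 x (by simp [hx])
  obtain ⟨c, hc⟩ := exists_apply_sub_self_eq_one (ρ σ) hf₀
    (by simpa only [Ideal.span_image_fin_lt_one] using hreg 1) (hfG 0 σ) (hfg 0) (b.2 σ)
    (congrArg Subtype.val hab).symm
  exact apply_sub_self_ne_one_of_constantCoeff_X (ρ σ)
    (fun i => (hlin σ i).coeff_eq_zero (by simp)) c hc

/-- If `fᵢ = σ(gᵢ) − gᵢ` with the `fᵢ` invariant, then
`f₁u₂₃ − f₂u₁₃ + f₃u₁₂ = 0` for `u_{ij} = fᵢgⱼ − fⱼgᵢ`, and if the `fᵢ` form a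
regular sequence in `R` and all `u_{ij}` are invariant, then `f₁,f₂,f₃` is not a
regular sequence in `R^G`. -/
theorem stmt6 {K : Type*} [Field K] [IsAlgClosed K] {n : ℕ} {G : Type*} [Group G] [Fintype G]
    (ρ : G →* (MvPolynomial (Fin n) K ≃ₐ[K] MvPolynomial (Fin n) K))
    (hlin : ∀ (σ : G) (i : Fin n), (ρ σ (X i)).IsHomogeneous 1)
    (σ : G) (f g : Fin 3 → MvPolynomial (Fin n) K)
    (hfG : ∀ i, f i ∈ invAlg ρ)
    (hhom : ∀ i, ∃ d : ℕ, 0 < d ∧ (f i).IsHomogeneous d)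
    (hfg : ∀ i, f i = ρ σ (g i) - g i)
    (hreg : ∀ (i : Fin 3) (x : MvPolynomial (Fin n) K),
      f i * x ∈ Ideal.span (f '' {j | j < i}) → x ∈ Ideal.span (f '' {j | j < i})) :
    f 0 * (f 1 * g 2 - f 2 * g 1) - f 1 * (f 0 * g 2 - f 2 * g 0)
        + f 2 * (f 0 * g 1 - f 1 * g 0) = 0 ∧
    ((∀ i j, f i * g j - f j * g i ∈ invAlg ρ) →
      ¬ (∀ (i : Fin 3) (x : invAlg ρ),
          (⟨f i, hfG i⟩ : invAlg ρ) * x ∈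
            Ideal.span ((fun j => (⟨f j, hfG j⟩ : invAlg ρ)) '' {j | j < i}) →
          x ∈ Ideal.span ((fun j => (⟨f j, hfG j⟩ : invAlg ρ)) '' {j | j < i}))) :=
  stmt6_general ρ hlin σ f g hfG hfg hreg
end

section
/- Let R be a commutative ring and I ⊂ R an ideal containing a regular sequence a_1, a_2 of length 2. Then for every short exact sequence 0 → R → M → R/I → 0 of R-modules, there exists m ∈ M mapping to 1 + I in R/I with I·m = 0; equivalently, the sequence splits. -/
/-!
Lift `1 ∈ R/I` to some `m₀ ∈ M`. For `x ∈ I` the element `x • m₀` lies in `ker ψ = φ(R)`, so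
`x ↦ φ⁻¹(x • m₀)` is an `R`-linear map `I → R`. Because `I` contains a regular sequence of
length 2, every such map is multiplication by some `c ∈ R`, and then `m₀ - φ c` is still a lift
of `1` which is killed by `I`.
-/

section

variable {R : Type*} [CommRing R] {I : Ideal R}

theorem Ideal.mul_linearMap_apply_comm (f : I →ₗ[R] R) (x y : I) :
    (y : R) * f x = x * f y := by
  rw [← smul_eq_mul, ← smul_eq_mul, ← map_smul, ← map_smul]
  congr 1
  ext
  exact mul_comm _ _

/-- `Hom_R(I, R) = R` for an ideal `I` of depth at least 2. -/
theorem Ideal.exists_linearMap_apply_eq_mul_of_regular_pair {a₁ a₂ : R}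
    (ha₁I : a₁ ∈ I) (ha₂I : a₂ ∈ I)
    (ha₁ : ∀ x : R, a₁ * x = 0 → x = 0)
    (ha₂ : ∀ x : R, a₂ * x ∈ Ideal.span {a₁} → x ∈ Ideal.span {a₁})
    (f : I →ₗ[R] R) : ∃ c : R, ∀ x : I, f x = x * c := by
  obtain ⟨c, hc⟩ : a₁ ∣ f ⟨a₁, ha₁I⟩ := by
    rw [← Ideal.mem_span_singleton]
    apply ha₂
    rw [Ideal.mul_linearMap_apply_comm f ⟨a₁, ha₁I⟩ ⟨a₂, ha₂I⟩, Ideal.mem_span_singleton]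
    exact dvd_mul_right _ _
  refine ⟨c, fun x => sub_eq_zero.mp (ha₁ _ ?_)⟩
  have hx := Ideal.mul_linearMap_apply_comm f x ⟨a₁, ha₁I⟩
  rw [hc] at hx
  linear_combination hx

end

theorem exists_linearMap_map_eq_smul_of_range_eq_ker {R M : Type*} [CommRing R] {I : Ideal R}
    [AddCommGroup M] [Module R M] {φ : R →ₗ[R] M} {ψ : M →ₗ[R] R ⧸ I}
    (hφ : Function.Injective φ) (hexact : LinearMap.range φ = LinearMap.ker ψ)
    {m₀ : M} (hm₀ : ψ m₀ = 1) :
    ∃ f : I →ₗ[R] R, ∀ x : I, φ (f x) = (x : R) • m₀ := by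
  have hmem : ∀ x : I, (x : R) • m₀ ∈ LinearMap.range φ := by
    intro x
    rw [hexact, LinearMap.mem_ker, map_smul, hm₀, Algebra.smul_def, mul_one,
      Ideal.Quotient.algebraMap_eq, Ideal.Quotient.eq_zero_iff_mem]
    exact x.2
  let lift : I →ₗ[R] LinearMap.range φ :=
    ((LinearMap.toSpanSingleton R M m₀).comp I.subtype).codRestrict _ hmem
  refine ⟨(LinearEquiv.ofInjective φ hφ).symm.toLinearMap.comp lift, fun x => ?_⟩
  exact congrArg Subtype.val ((LinearEquiv.ofInjective φ hφ).apply_symm_apply (lift x))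

/-- If an ideal `I` of a commutative ring `R` contains a regular
sequence `a₁, a₂` of length 2, then every short exact sequence
`0 → R → M → R/I → 0` splits: there is `m ∈ M` with `ψ(m) = 1 + I` and `I·m = 0`. -/
theorem stmt7 {R : Type*} [CommRing R] (I : Ideal R) (a₁ a₂ : R)
    (ha₁I : a₁ ∈ I) (ha₂I : a₂ ∈ I)
    (ha₁ : ∀ x : R, a₁ * x = 0 → x = 0)
    (ha₂ : ∀ x : R, a₂ * x ∈ Ideal.span {a₁} → x ∈ Ideal.span {a₁})
    (M : Type*) [AddCommGroup M] [Module R M]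
    (φ : R →ₗ[R] M) (ψ : M →ₗ[R] R ⧸ I)
    (hφ : Function.Injective φ) (hψ : Function.Surjective ψ)
    (hexact : LinearMap.range φ = LinearMap.ker ψ) :
    ∃ m : M, ψ m = (1 : R ⧸ I) ∧ ∀ x ∈ I, x • m = 0 := by
  obtain ⟨m₀, hm₀⟩ := hψ 1
  obtain ⟨f, hf⟩ := exists_linearMap_map_eq_smul_of_range_eq_ker hφ hexact hm₀
  obtain ⟨c, hc⟩ := I.exists_linearMap_apply_eq_mul_of_regular_pair ha₁I ha₂I ha₁ ha₂ f
  have hψφ : ψ (φ c) = 0 := LinearMap.mem_ker.mp (hexact ▸ LinearMap.mem_range_self φ c)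
  refine ⟨m₀ - φ c, by rw [map_sub, hm₀, hψφ, sub_zero], fun x hx => ?_⟩
  rw [smul_sub, ← hf ⟨x, hx⟩, hc, ← smul_eq_mul, map_smul, sub_self]
end

section
/- (Graded Hartshorne connectedness, ideal version) Let R be a graded commutative ring with R_0 = K a field, and let I, J ⊆ R be homogeneous ideals with I·J = {0}. If I + J contains a regular sequence of length 2, then I ⊆ J or J ⊆ I. -/
/-!
Write `a₁ = i + j` with `i ∈ I`, `j ∈ J`. Since `I * J = 0`, `a₂ i = a₁ i₂` and `a₂ j = a₁ j₂`,
so regularity of `a₂` modulo `a₁` gives `i = e a₁` and `j = f a₁`. Cancelling `a₁` yields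
`e + f = 1` and `e f = 0`, so `e` is an idempotent. A connected graded ring has no nontrivial
idempotents, hence `a₁` lies in `I` or in `J`, and then the nonzerodivisor `a₁` kills the other
ideal.
-/

open DirectSum

namespace GradedRing

variable {σ A : Type*} [CommRing A] [SetLike σ A] [AddSubgroupClass σ A]
  (𝒜 : ℕ → σ) [GradedRing 𝒜]

theorem eq_zero_of_isIdempotentElem_of_projZeroRingHom_eq_zero {e : A}
    (he : IsIdempotentElem e) (h0 : projZeroRingHom 𝒜 e = 0) : e = 0 := by
  replace h0 : (decompose 𝒜 e 0 : A) = 0 := h0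
  have hcomp : ∀ n, (decompose 𝒜 e n : A) = 0 := by
    intro n
    induction n using Nat.strong_induction_on with
    | _ n ih =>
      -- the degree-`n` part of `e * e` only involves components of degree `0` and `< n`
      rw [← he.eq, decompose_mul, coe_mul_apply_eq_sum_antidiagonal]
      refine Finset.sum_eq_zero fun ij hij => ?_
      rw [Finset.HasAntidiagonal.mem_antidiagonal] at hij
      rcases Nat.eq_zero_or_pos ij.1 with h | h
      · rw [h, h0, zero_mul]
      · rw [ih ij.2 (by omega), mul_zero]
  apply (decompose 𝒜).injective
  ext n
  simp [hcomp n]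

theorem isIdempotentElem_eq_zero_or_one
    (h𝒜 : ∀ e ∈ 𝒜 0, IsIdempotentElem e → e = 0 ∨ e = 1) {e : A} (he : IsIdempotentElem e) :
    e = 0 ∨ e = 1 := by
  rcases h𝒜 _ (SetLike.coe_mem (decompose 𝒜 e 0)) (he.map (projZeroRingHom 𝒜)) with h | h
  · exact Or.inl (eq_zero_of_isIdempotentElem_of_projZeroRingHom_eq_zero 𝒜 he h)
  · refine Or.inr (sub_eq_zero.mp ?_).symm
    refine eq_zero_of_isIdempotentElem_of_projZeroRingHom_eq_zero 𝒜 he.one_sub ?_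
    rw [map_sub, map_one, projZeroRingHom_apply, h, sub_self]

theorem isIdempotentElem_eq_zero_or_one_of_degree_zero_eq_range {K : Type*} [Field K]
    [Algebra K A] (h0 : (𝒜 0 : Set A) = Set.range (algebraMap K A)) {e : A}
    (he : IsIdempotentElem e) : e = 0 ∨ e = 1 := by
  refine isIdempotentElem_eq_zero_or_one 𝒜 (fun x hx hxx => ?_) he
  obtain ⟨k, rfl⟩ : x ∈ Set.range (algebraMap K A) := h0 ▸ hx
  rcases eq_or_ne k 0 with rfl | hk
  · exact Or.inl (map_zero _)
  · exact Or.inr ((IsIdempotentElem.iff_eq_one_of_isUnit (hk.isUnit.map _)).mp hxx)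

end GradedRing

namespace Ideal

variable {R : Type*} [CommRing R] {I J : Ideal R}

theorem eq_bot_of_mul_eq_bot_of_mem {a : R} (hIJ : I * J = ⊥) (haJ : a ∈ J)
    (ha : ∀ x : R, a * x = 0 → x = 0) : I = ⊥ :=
  eq_bot_iff.mpr fun x hx =>
    ha x <| by simpa [mul_comm, hIJ] using mul_mem_mul hx haJ

theorem add_mul_eq_add_mul_of_mul_eq_bot (hIJ : I * J = ⊥) {x x' y y' : R} (hx : x ∈ I)
    (hx' : x' ∈ I) (hy : y ∈ J) (hy' : y' ∈ J) : (x + y) * x' = (x' + y') * x := by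
  have hyx' : x' * y = 0 := by simpa [hIJ] using mul_mem_mul hx' hy
  have hy'x : x * y' = 0 := by simpa [hIJ] using mul_mem_mul hx hy'
  linear_combination hyx' - hy'x

theorem exists_isIdempotentElem_of_regular_sequence_mem_sup (hIJ : I * J = ⊥) {a₁ a₂ : R}
    (ha₁IJ : a₁ ∈ I ⊔ J) (ha₂IJ : a₂ ∈ I ⊔ J) (ha₁ : ∀ x : R, a₁ * x = 0 → x = 0)
    (ha₂ : ∀ x : R, a₂ * x ∈ span {a₁} → x ∈ span {a₁}) :
    ∃ e : R, IsIdempotentElem e ∧ e * a₁ ∈ I ∧ (1 - e) * a₁ ∈ J := by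
  have hJI : J * I = ⊥ := mul_comm I J ▸ hIJ
  obtain ⟨i₁, hi₁, j₁, hj₁, h₁⟩ := Submodule.mem_sup.mp ha₁IJ
  obtain ⟨i₂, hi₂, j₂, hj₂, h₂⟩ := Submodule.mem_sup.mp ha₂IJ
  obtain ⟨e, he⟩ := mem_span_singleton'.mp <| ha₂ i₁ <| mem_span_singleton'.mpr
    ⟨i₂, by rw [← h₁, ← h₂, mul_comm, add_mul_eq_add_mul_of_mul_eq_bot hIJ hi₂ hi₁ hj₂ hj₁]⟩
  obtain ⟨f, hf⟩ := mem_span_singleton'.mp <| ha₂ j₁ <| mem_span_singleton'.mpr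
    ⟨j₂, by rw [← h₁, ← h₂, mul_comm, add_comm i₁, add_comm i₂,
      add_mul_eq_add_mul_of_mul_eq_bot hJI hj₂ hj₁ hi₂ hi₁]⟩
  have hef : e + f = 1 := by
    linear_combination ha₁ (e + f - 1) (by linear_combination he + hf + h₁)
  have hij : i₁ * j₁ = 0 := by simpa [hIJ] using mul_mem_mul hi₁ hj₁
  have hef0 : e * f = 0 :=
    ha₁ _ <| ha₁ _ <| by linear_combination (f * a₁) * he + i₁ * hf + hij
  refine ⟨e, ?_, he ▸ hi₁, ?_⟩
  · show e * e = e
    linear_combination e * hef - hef0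
  · rwa [← eq_sub_of_add_eq' hef, hf]

end Ideal

theorem stmt8_general {K A : Type*} [Field K] [CommRing A] [Algebra K A]
    (𝒜 : ℕ → Submodule K A) [GradedAlgebra 𝒜]
    (h0 : (𝒜 0 : Set A) = Set.range (algebraMap K A))
    (I J : Ideal A)
    (hIJ : I * J = ⊥)
    (a₁ a₂ : A) (ha₁I : a₁ ∈ I ⊔ J) (ha₂I : a₂ ∈ I ⊔ J)
    (ha₁ : ∀ x : A, a₁ * x = 0 → x = 0)
    (ha₂ : ∀ x : A, a₂ * x ∈ Ideal.span {a₁} → x ∈ Ideal.span {a₁}) :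
    I ≤ J ∨ J ≤ I := by
  obtain ⟨e, he, heI, heJ⟩ :=
    Ideal.exists_isIdempotentElem_of_regular_sequence_mem_sup hIJ ha₁I ha₂I ha₁ ha₂
  rcases GradedRing.isIdempotentElem_eq_zero_or_one_of_degree_zero_eq_range 𝒜 h0 he
    with rfl | rfl
  · have hI : I = ⊥ := Ideal.eq_bot_of_mul_eq_bot_of_mem hIJ (by simpa using heJ) ha₁
    exact Or.inl (hI ▸ bot_le)
  · have hJ : J = ⊥ :=
      Ideal.eq_bot_of_mul_eq_bot_of_mem (mul_comm I J ▸ hIJ) (by simpa using heI) ha₁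
    exact Or.inr (hJ ▸ bot_le)

/-- **graded Hartshorne connectedness, ideal version.** Let `A` be an
`ℕ`-graded commutative ring with degree-0 part the field `K`, and let `I, J` be
homogeneous ideals with `I·J = 0`. If `I + J` contains a regular sequence of
length 2, then `I ⊆ J` or `J ⊆ I`. -/
theorem stmt8 {K A : Type*} [Field K] [CommRing A] [Algebra K A]
    (𝒜 : ℕ → Submodule K A) [GradedAlgebra 𝒜]
    (h0 : (𝒜 0 : Set A) = Set.range (algebraMap K A))
    (I J : Ideal A) (hI : I.IsHomogeneous 𝒜) (hJ : J.IsHomogeneous 𝒜)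
    (hIJ : I * J = ⊥)
    (a₁ a₂ : A) (ha₁I : a₁ ∈ I ⊔ J) (ha₂I : a₂ ∈ I ⊔ J)
    (ha₁ : ∀ x : A, a₁ * x = 0 → x = 0)
    (ha₂ : ∀ x : A, a₂ * x ∈ Ideal.span {a₁} → x ∈ Ideal.span {a₁}) :
    I ≤ J ∨ J ≤ I :=
  stmt8_general 𝒜 h0 I J hIJ a₁ a₂ ha₁I ha₂I ha₁ ha₂
end

section
/- (Noether's degree bound for separating invariants) Let G be a finite group acting linearly on V = K^n and on R = K[x_1,...,x_n]. With additional variables t and y, form F(t,y) := Π_{σ∈G} (y − Σ_{i=1}^n σ(x_i) t^{i−1}) ∈ R^G[t,y]. If all coefficients of F (as a polynomial in t, y with coefficients in R) agree when evaluated at two points v, w ∈ K^n, then v and w lie in the same G-orbit. -/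
/-!
Evaluating `F` at `u` gives `∏_σ (y − p(σ⁻¹u))`, where `p(u) = ∑ᵢ uᵢ tⁱ⁻¹` encodes the vector
`u` as a polynomial in `t`. If these products agree for `v` and `w`, then `p(v)`, a root of the
first, is a root of the second, so `p(v) = p(σ⁻¹w)` for some `σ`, and `p` is injective.
-/

open MvPolynomial

namespace Polynomial

theorem sum_C_mul_X_pow_injective {R : Type*} [Semiring R] (n : ℕ) :
    Function.Injective fun u : Fin n → R => ∑ i : Fin n, C (u i) * X ^ (i : ℕ) := by
  intro u u' h
  funext i
  simpa [coeff_X_pow, Fin.val_eq_val, Finset.sum_ite_eq'] using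
    congrArg (coeff · (i : ℕ)) h

theorem exists_eq_of_prod_X_sub_C_eq {R ι : Type*} [CommRing R] [IsDomain R] {s : Finset ι}
    {a b : ι → R} (h : ∏ i ∈ s, (X - C (a i)) = ∏ i ∈ s, (X - C (b i))) {j : ι} (hj : j ∈ s) :
    ∃ i ∈ s, a j = b i := by
  have hroot : eval (a j) (∏ i ∈ s, (X - C (b i))) = 0 := by
    rw [← h, eval_prod]
    exact Finset.prod_eq_zero hj (by simp)
  rw [eval_prod] at hroot
  obtain ⟨i, hi, hzero⟩ := Finset.prod_eq_zero_iff.mp hroot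
  exact ⟨i, hi, by simpa [sub_eq_zero] using hzero⟩

end Polynomial

theorem map_eval_prod_X_sub_C_orbit {K : Type*} [CommRing K] {n : ℕ} {G : Type*} [Group G]
    [Fintype G] (ρ : G →* (MvPolynomial (Fin n) K ≃ₐ[K] MvPolynomial (Fin n) K))
    (π : G →* ((Fin n → K) ≃ₗ[K] (Fin n → K)))
    (hcompat : ∀ (σ : G) (f : MvPolynomial (Fin n) K) (v : Fin n → K),
      eval v (ρ σ f) = eval (π σ⁻¹ v) f)
    (u : Fin n → K) :
    Polynomial.map (Polynomial.mapRingHom (eval u)) (∏ σ : G, (Polynomial.X - Polynomial.C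
      (∑ i : Fin n, Polynomial.C (ρ σ (X i)) * Polynomial.X ^ (i : ℕ)))) =
      ∏ σ : G, (Polynomial.X - Polynomial.C
        (∑ i : Fin n, Polynomial.C (π σ⁻¹ u i) * Polynomial.X ^ (i : ℕ))) := by
  simp [Polynomial.map_prod, Polynomial.map_sum, hcompat]

theorem stmt9_general {K : Type*} [Field K] {n : ℕ} {G : Type*} [Group G] [Fintype G]
    (ρ : G →* (MvPolynomial (Fin n) K ≃ₐ[K] MvPolynomial (Fin n) K))
    (π : G →* ((Fin n → K) ≃ₗ[K] (Fin n → K)))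
    (hcompat : ∀ (σ : G) (f : MvPolynomial (Fin n) K) (v : Fin n → K),
      eval v (ρ σ f) = eval (π σ⁻¹ v) f)
    (F : Polynomial (Polynomial (MvPolynomial (Fin n) K)))
    (hF : F = ∏ σ : G, (Polynomial.X - Polynomial.C
      (∑ i : Fin n, Polynomial.C (ρ σ (X i)) * Polynomial.X ^ (i : ℕ))))
    (v w : Fin n → K)
    (hvw : Polynomial.map (Polynomial.mapRingHom (eval v)) F =
           Polynomial.map (Polynomial.mapRingHom (eval w)) F) :
    ∃ σ : G, π σ v = w := by
  subst hF
  rw [map_eval_prod_X_sub_C_orbit ρ π hcompat, map_eval_prod_X_sub_C_orbit ρ π hcompat] at hvw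
  obtain ⟨σ, -, hσ⟩ := Polynomial.exists_eq_of_prod_X_sub_C_eq hvw (Finset.mem_univ 1)
  have hv : v = π σ⁻¹ w := by
    simpa using Polynomial.sum_C_mul_X_pow_injective n hσ
  exact ⟨σ, by rw [hv, map_inv]; exact (π σ).apply_symm_apply w⟩

/-- **Noether's degree bound for separating invariants.** For a finite
group `G` acting linearly on `V = Kⁿ`, form `F(t,y) = ∏_{σ∈G} (y − ∑ᵢ σ(xᵢ) tⁱ⁻¹)`
in `R[t][y]`. If all coefficients of `F` agree when evaluated at two points
`v, w ∈ Kⁿ`, then `v` and `w` lie in the same `G`-orbit. -/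
theorem stmt9 {K : Type*} [Field K] {n : ℕ} {G : Type*} [Group G] [Fintype G]
    (ρ : G →* (MvPolynomial (Fin n) K ≃ₐ[K] MvPolynomial (Fin n) K))
    (hlin : ∀ (σ : G) (i : Fin n), (ρ σ (X i)).IsHomogeneous 1)
    (π : G →* ((Fin n → K) ≃ₗ[K] (Fin n → K)))
    (hcompat : ∀ (σ : G) (f : MvPolynomial (Fin n) K) (v : Fin n → K),
      eval v (ρ σ f) = eval (π σ⁻¹ v) f)
    (F : Polynomial (Polynomial (MvPolynomial (Fin n) K)))
    (hF : F = ∏ σ : G, (Polynomial.X - Polynomial.C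
      (∑ i : Fin n, Polynomial.C (ρ σ (X i)) * Polynomial.X ^ (i : ℕ))))
    (v w : Fin n → K)
    (hvw : Polynomial.map (Polynomial.mapRingHom (eval v)) F =
           Polynomial.map (Polynomial.mapRingHom (eval w)) F) :
    ∃ σ : G, π σ v = w :=
  stmt9_general ρ π hcompat F hF v w hvw
end

section
/- Let G be a finite group acting linearly on V = K^n with K any field. Two points v, w ∈ V lie in the same G-orbit if and only if f(v) = f(w) for every invariant f ∈ R^G = K[x_1,...,x_n]^G. -/
/-!
Invariants are constant on orbits. Conversely, if `w` is not in the orbit of `v`, pick a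
polynomial `g` vanishing at `w` and equal to `1` on the (finite) orbit of `v`; the orbit
product `∏ σ, σ • g` is invariant, equals `1` at `v` and vanishes at `w`.
-/

open MvPolynomial

namespace MvPolynomial

variable {K ι : Type*} [Field K]

theorem exists_eval_eq_zero_and_eval_eq_one_of_ne {u w : ι → K} (h : u ≠ w) :
    ∃ ℓ : MvPolynomial ι K, eval u ℓ = 0 ∧ eval w ℓ = 1 := by
  obtain ⟨i, hi⟩ := Function.ne_iff.mp h
  have hwu : w i - u i ≠ 0 := sub_ne_zero.mpr (Ne.symm hi)
  refine ⟨C (w i - u i)⁻¹ * (X i - C (u i)), by simp, ?_⟩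
  simp [inv_mul_cancel₀ hwu]

theorem exists_eval_eq_zero_and_eval_eq_one_on_finset {s : Finset (ι → K)} {w : ι → K}
    (hw : w ∉ s) :
    ∃ g : MvPolynomial ι K, eval w g = 0 ∧ ∀ u ∈ s, eval u g = 1 := by
  have hne : ∀ u ∈ s, u ≠ w := fun u hu huw => hw (huw ▸ hu)
  choose! ℓ hℓu hℓw using fun u hu => exists_eval_eq_zero_and_eval_eq_one_of_ne (hne u hu)
  refine ⟨1 - ∏ u ∈ s, ℓ u, ?_, fun u hu => ?_⟩
  · simp [map_prod, Finset.prod_eq_one hℓw]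
  · rw [map_sub, map_one, map_prod, Finset.prod_eq_zero hu (hℓu u hu), sub_zero]

end MvPolynomial

theorem AlgEquiv.orbit_prod_invariant {K R G : Type*} [CommSemiring K] [CommSemiring R]
    [Algebra K R] [Group G] [Fintype G] (ρ : G →* (R ≃ₐ[K] R)) (g : R) (τ : G) :
    ρ τ (∏ σ, ρ σ g) = ∏ σ, ρ σ g := by
  rw [map_prod]
  exact Fintype.prod_equiv (Equiv.mulLeft τ) _ _ fun σ => by simp [map_mul]

theorem stmt10_general {K : Type*} [Field K] {n : ℕ} {G : Type*} [Group G] [Fintype G]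
    (ρ : G →* (MvPolynomial (Fin n) K ≃ₐ[K] MvPolynomial (Fin n) K))
    (π : G →* ((Fin n → K) ≃ₗ[K] (Fin n → K)))
    (hcompat : ∀ (σ : G) (f : MvPolynomial (Fin n) K) (v : Fin n → K),
      eval v (ρ σ f) = eval (π σ⁻¹ v) f)
    (v w : Fin n → K) :
    (∃ σ : G, π σ v = w) ↔
      (∀ f : MvPolynomial (Fin n) K, (∀ σ, ρ σ f = f) → eval v f = eval w f) := by
  classical
  constructor
  · rintro ⟨σ, rfl⟩ f hf
    rw [← inv_inv σ, ← hcompat, hf]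
  · intro h
    by_contra hno
    have hw : w ∉ Finset.univ.image fun σ => π σ v := by simpa using hno
    obtain ⟨g, hgw, hgv⟩ := exists_eval_eq_zero_and_eval_eq_one_on_finset hw
    have hfv : eval v (∏ σ, ρ σ g) = 1 := by
      simp only [map_prod, hcompat]
      exact Finset.prod_eq_one fun σ _ => hgv _ (Finset.mem_image_of_mem _ (Finset.mem_univ _))
    have hfw : eval w (∏ σ, ρ σ g) = 0 := by
      simp only [map_prod, hcompat]
      exact Finset.prod_eq_zero (Finset.mem_univ 1) (by simpa using hgw)
    exact one_ne_zero (hfv ▸ hfw ▸ h _ (AlgEquiv.orbit_prod_invariant ρ g))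

/-- For a finite group `G` acting linearly on `V = Kⁿ`, two points
`v, w ∈ V` lie in the same `G`-orbit if and only if every invariant
`f ∈ K[x₁,…,xₙ]^G` satisfies `f(v) = f(w)`. -/
theorem stmt10 {K : Type*} [Field K] {n : ℕ} {G : Type*} [Group G] [Fintype G]
    (ρ : G →* (MvPolynomial (Fin n) K ≃ₐ[K] MvPolynomial (Fin n) K))
    (hlin : ∀ (σ : G) (i : Fin n), (ρ σ (X i)).IsHomogeneous 1)
    (π : G →* ((Fin n → K) ≃ₗ[K] (Fin n → K)))
    (hcompat : ∀ (σ : G) (f : MvPolynomial (Fin n) K) (v : Fin n → K),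
      eval v (ρ σ f) = eval (π σ⁻¹ v) f)
    (v w : Fin n → K) :
    (∃ σ : G, π σ v = w) ↔
      (∀ f : MvPolynomial (Fin n) K, (∀ σ, ρ σ f = f) → eval v f = eval w f) :=
  stmt10_general ρ π hcompat v w
end

section
/- Let G ⊆ GL(V) be a finite group, V = K^n over an algebraically closed field K, and suppose G is not generated by reflections. Let H ⊊ G be the subgroup generated by all reflections. Then the closed sets X := ∪_{σ∈H} Z_σ and Y := ∪_{τ∈G∖H} Z_τ cover the graph Γ of the action, neither contains the other, and every irreducible component of X ∩ Y has dimension ≤ n − 2. -/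
/-!
`Z_σ ∩ Z_τ` is the graph of `σ` over the fixed space of `σ⁻¹τ`; for `σ ∈ H`, `τ ∉ H` the element
`σ⁻¹τ` lies outside `H`, so it is not a reflection and that fixed space has codimension at least 2.
Neither of `X`, `Y` contains the other because a vector space over an infinite field is not a
finite union of proper subspaces: for `σ` on one side there is a `v` with `σ v ≠ τ v` for all the
finitely many `τ` on the other side, and then `(v, σ v)` lies in one set but not in the other.
-/

open LinearMap

section Graph

variable {K M N : Type*} [Field K] [AddCommGroup M] [Module K M] [AddCommGroup N] [Module K N]

lemma LinearMap.graph_inf_graph (f g : M →ₗ[K] N) :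
    graph f ⊓ graph g = (eqLocus f g).map (LinearMap.id.prod f) := by
  ext ⟨x, y⟩
  simp only [Submodule.mem_inf, mem_graph_iff, Submodule.mem_map, mem_eqLocus, prod_apply,
    Function.prod, id_coe, id_eq, Prod.mk.injEq]
  constructor
  · rintro ⟨h1, h2⟩
    exact ⟨x, h1 ▸ h2, rfl, h1.symm⟩
  · rintro ⟨v, hv, rfl, rfl⟩
    exact ⟨rfl, hv⟩

lemma LinearMap.finrank_graph_inf_graph (f g : M →ₗ[K] N) :
    Module.finrank K ↥(graph f ⊓ graph g) = Module.finrank K ↥(eqLocus f g) := by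
  have hinj : Function.Injective (LinearMap.id.prod f : M →ₗ[K] M × N) :=
    fun a b h ↦ congrArg Prod.fst h
  rw [graph_inf_graph]
  exact (Submodule.equivMapOfInjective _ hinj _).finrank_eq.symm

lemma LinearMap.exists_forall_apply_ne [Infinite K] {ι : Type*} [Finite ι] {f : ι → M →ₗ[K] N}
    {g : M →ₗ[K] N} (hfg : ∀ i, f i ≠ g) : ∃ v, ∀ i, f i v ≠ g v := by
  by_contra! hcover
  obtain ⟨i, hi⟩ := Subspace.exists_eq_top_of_iUnion_eq_univ (p := fun i ↦ eqLocus (f i) g) <|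
    Set.eq_univ_of_forall fun v ↦ by simpa using hcover v
  exact hfg i (eqLocus_eq_top.mp hi)

lemma LinearMap.biUnion_graph_not_subset_biUnion_graph [Infinite K] {ι : Type*} [Finite ι]
    {f : ι → M →ₗ[K] N} (hf : Function.Injective f) {s t : Set ι} {i : ι} (hit : i ∈ t)
    (his : i ∉ s) :
    ¬ (⋃ j ∈ t, (graph (f j) : Set (M × N))) ⊆ ⋃ j ∈ s, (graph (f j) : Set (M × N)) := by
  obtain ⟨v, hv⟩ := exists_forall_apply_ne (f := fun j : s ↦ f j) (g := f i)
    fun j h ↦ his (hf h ▸ j.2)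
  intro hsub
  obtain ⟨j, hj, hvj⟩ := Set.mem_iUnion₂.mp <|
    hsub (Set.mem_biUnion hit (((f i).mem_graph_iff (v, f i v)).mpr rfl))
  exact hv ⟨j, hj⟩ (((f j).mem_graph_iff _).mp hvj).symm

end Graph

lemma LinearEquiv.eqLocus_eq_eqLocus_inv_mul_id {R M : Type*} [Semiring R] [AddCommMonoid M]
    [Module R M] (e e' : M ≃ₗ[R] M) :
    eqLocus (e : M →ₗ[R] M) e' = eqLocus ((e⁻¹ * e' : M ≃ₗ[R] M) : M →ₗ[R] M) LinearMap.id := by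
  ext v
  simp only [mem_eqLocus, LinearEquiv.coe_coe, id_coe, id_eq]
  exact ⟨fun h ↦ by simp [← h], fun h ↦ by simpa using congrArg e h.symm⟩

lemma MonoidHom.finrank_graph_inf_graph {K M G : Type*} [Field K] [AddCommGroup M] [Module K M]
    [Group G] (π : G →* (M ≃ₗ[K] M)) (σ τ : G) :
    Module.finrank K ↥(LinearMap.graph (π σ : M →ₗ[K] M) ⊓ LinearMap.graph (π τ : M →ₗ[K] M)) =
      Module.finrank K ↥(LinearMap.eqLocus (π (σ⁻¹ * τ) : M →ₗ[K] M) LinearMap.id) := by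
  rw [LinearMap.finrank_graph_inf_graph, LinearEquiv.eqLocus_eq_eqLocus_inv_mul_id, map_mul,
    map_inv]

/-- Let `G ⊆ GL(V)` be finite, `V = Kⁿ` with `K` algebraically
closed, and suppose `G` is not generated by reflections; let `H ⊊ G` be the subgroup
generated by all reflections. Then `X = ∪_{σ∈H} Z_σ` and `Y = ∪_{τ∉H} Z_τ` cover the
graph `Γ` of the action, neither contains the other, and every piece
`Z_σ ∩ Z_τ` (`σ ∈ H`, `τ ∉ H`) of `X ∩ Y` has dimension `≤ n − 2`. -/
theorem stmt12 {K : Type*} [Field K] [IsAlgClosed K] {n : ℕ} {G : Type*} [Group G]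
    [Fintype G] (π : G →* ((Fin n → K) ≃ₗ[K] (Fin n → K)))
    (hinj : Function.Injective π)
    (H : Subgroup G)
    (hH : H = Subgroup.closure {g : G | n - 1 ≤ Module.finrank K
      ↥(LinearMap.eqLocus (π g).toLinearMap
        (LinearMap.id : (Fin n → K) →ₗ[K] (Fin n → K)))})
    (hHne : H ≠ ⊤)
    (Γ X Y : Set ((Fin n → K) × (Fin n → K)))
    (hΓ : Γ = ⋃ σ : G, (LinearMap.graph (π σ).toLinearMap :
      Set ((Fin n → K) × (Fin n → K))))
    (hX : X = ⋃ σ ∈ (H : Set G), (LinearMap.graph (π σ).toLinearMap :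
      Set ((Fin n → K) × (Fin n → K))))
    (hY : Y = ⋃ τ ∈ {τ : G | τ ∉ H}, (LinearMap.graph (π τ).toLinearMap :
      Set ((Fin n → K) × (Fin n → K)))) :
    X ∪ Y = Γ ∧ ¬ X ⊆ Y ∧ ¬ Y ⊆ X ∧
    (X ∩ Y = ⋃ σ ∈ (H : Set G), ⋃ τ ∈ {τ : G | τ ∉ H},
      ((LinearMap.graph (π σ).toLinearMap ⊓ LinearMap.graph (π τ).toLinearMap :
        Submodule K ((Fin n → K) × (Fin n → K))) : Set _)) ∧
    (∀ σ ∈ H, ∀ τ ∉ H, Module.finrank K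
      ↥(LinearMap.graph (π σ).toLinearMap ⊓ LinearMap.graph (π τ).toLinearMap) ≤ n - 2) := by
  have hπ : Function.Injective fun σ ↦ (π σ).toLinearMap :=
    LinearEquiv.toLinearMap_injective.comp hinj
  obtain ⟨τ₀, hτ₀⟩ : ∃ τ₀, τ₀ ∉ H := by simpa [Subgroup.eq_top_iff'] using hHne
  have hcompl : {τ : G | τ ∉ H} = (H : Set G)ᶜ := rfl
  refine ⟨?_, ?_, ?_, ?_, ?_⟩
  · rw [hX, hY, hΓ, ← Set.biUnion_union, hcompl, Set.union_compl_self, Set.biUnion_univ]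
  · rw [hX, hY]
    exact biUnion_graph_not_subset_biUnion_graph hπ H.one_mem (not_not.mpr H.one_mem)
  · rw [hX, hY]
    exact biUnion_graph_not_subset_biUnion_graph hπ (s := H) hτ₀ hτ₀
  · rw [hX, hY, Set.iUnion₂_inter_iUnion₂]
    simp only [Submodule.coe_inf]
  · intro σ hσ τ hτ
    have hστ : σ⁻¹ * τ ∉ H := fun h ↦ hτ (by simpa using H.mul_mem hσ h)
    have hnot_refl : ¬ n - 1 ≤ _ := fun h ↦ hστ (hH ▸ Subgroup.subset_closure h)
    rw [π.finrank_graph_inf_graph]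
    omega
end

section
/- Let I ⊆ R^G be an ideal in the invariant ring of a finite group G acting on R = K[x_1,...,x_n] by K-algebra automorphisms, and let g ∈ R·I (the ideal of R generated by I). Then the norm Π_{σ∈G} σ(g) lies in I. -/
open MvPolynomial

/-!
Write `g = ∑ rᵢ bᵢ` with `bᵢ ∈ I` and put `Q = ∑ rᵢ Tᵢ` in new variables `Tᵢ` on which `G` acts
trivially. The polynomial `P = ∏_σ σ(Q)` is fixed by `G`, so its coefficients are invariant, and
its constant coefficient vanishes. Hence `P` is a polynomial over `R^G` without constant term,
and substituting `Tᵢ ↦ bᵢ ∈ I` lands in `I`; this substitution commutes with every `σ` because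
the `bᵢ` are invariant, so it sends `P` to `∏_σ σ(g)`.
-/

namespace MvPolynomial

variable {S R G ι : Type*} [CommRing S] [CommRing R] [Algebra S R] [Group G]
  (ρ : G →* (R ≃ₐ[S] R))

theorem eval_mem_of_constantCoeff_eq_zero {A : Type*} [CommRing A] (I : Ideal A)
    {P : MvPolynomial ι A} (hP : constantCoeff P = 0) {b : ι → A} (hb : ∀ i, b i ∈ I) :
    eval b P ∈ I := by
  have hvars : P ∈ Ideal.span (Set.range X) := by
    rw [← pow_one (Ideal.span _), mem_pow_idealOfVars_iff']
    intro m hm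
    rw [Nat.lt_one_iff, Finsupp.degree_eq_zero_iff] at hm
    rwa [hm, ← constantCoeff_eq]
  have hspan : Ideal.span (Set.range X) ≤ I.comap (eval b) :=
    Ideal.span_le.mpr <| Set.range_subset_iff.mpr fun i => by simpa using hb i
  exact hspan hvars

theorem map_map_apply_mul (τ σ : G) (Q : MvPolynomial ι R) :
    map (ρ τ : R →+* R) (map (ρ σ : R →+* R) Q) = map (ρ (τ * σ) : R →+* R) Q := by
  rw [map_map]
  exact congrArg (fun f => map f Q) (RingHom.ext fun x => by simp [AlgEquiv.mul_apply])

variable [Fintype G]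

noncomputable def orbitProd (Q : MvPolynomial ι R) : MvPolynomial ι R :=
  ∏ σ, map (ρ σ : R →+* R) Q

theorem map_orbitProd (τ : G) (Q : MvPolynomial ι R) :
    map (ρ τ : R →+* R) (orbitProd ρ Q) = orbitProd ρ Q := by
  simp only [orbitProd, map_prod, map_map_apply_mul]
  exact Fintype.prod_equiv (Equiv.mulLeft τ) _ _ fun _ => rfl

theorem coeff_orbitProd_mem {A : Subalgebra S R} (hA : ∀ x, x ∈ A ↔ ∀ σ, ρ σ x = x)
    (Q : MvPolynomial ι R) (m : ι →₀ ℕ) : (orbitProd ρ Q).coeff m ∈ A :=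
  (hA _).2 fun σ => by
    simpa [coeff_map] using congr_arg (coeff m) (map_orbitProd ρ σ Q)

theorem constantCoeff_orbitProd (Q : MvPolynomial ι R) :
    constantCoeff (orbitProd ρ Q) = ∏ σ, ρ σ (constantCoeff Q) := by
  simp [orbitProd, constantCoeff_map]

theorem eval_orbitProd {b : ι → R} (hb : ∀ σ i, ρ σ (b i) = b i) (Q : MvPolynomial ι R) :
    eval b (orbitProd ρ Q) = ∏ σ, ρ σ (eval b Q) := by
  simp only [orbitProd, map_prod, eval_map]
  refine Finset.prod_congr rfl fun σ _ => ?_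
  rw [← RingHom.coe_coe (ρ σ), eval₂_comp, show (ρ σ : R →+* R) ∘ b = b from _root_.funext (hb σ)]

end MvPolynomial

open MvPolynomial in
theorem prod_apply_mem_of_mem_span {S R G : Type*} [CommRing S] [CommRing R] [Algebra S R]
    [Group G] [Fintype G] (ρ : G →* (R ≃ₐ[S] R)) (A : Subalgebra S R)
    (hA : ∀ x, x ∈ A ↔ ∀ σ, ρ σ x = x) (I : Ideal A) {g : R}
    (hg : g ∈ Ideal.span ((fun x : A => (x : R)) '' I)) :
    ∃ h ∈ I, (h : R) = ∏ σ, ρ σ g := by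
  obtain ⟨t, htI, c, rfl⟩ := (Submodule.mem_span_image_iff_exists_fun _).mp hg
  set Q : MvPolynomial t R := ∑ i, C (c i) * X i
  have hQ : constantCoeff Q = 0 := by simp [Q]
  have hb : ∀ σ (i : t), ρ σ ((i : A) : R) = i := fun σ i => (hA _).1 (i : A).2 σ
  obtain ⟨P, hP⟩ : orbitProd ρ Q ∈ Set.range (map A.val.toRingHom) :=
    mem_range_map_iff_coeffs_subset.mpr fun r hr => by
      obtain ⟨m, -, rfl⟩ := mem_coeffs_iff.mp hr
      simpa using coeff_orbitProd_mem ρ hA Q m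
  have hP0 : constantCoeff P = 0 := by
    have h := constantCoeff_map A.val.toRingHom P
    rw [hP, constantCoeff_orbitProd, hQ] at h
    simpa using h.symm
  refine ⟨eval (fun i : t => (i : A)) P, eval_mem_of_constantCoeff_eq_zero I hP0 fun i => htI i.2, ?_⟩
  have hlift : ((eval (fun i : t => (i : A)) P : A) : R) =
      eval (fun i : t => ((i : A) : R)) (orbitProd ρ Q) := by
    rw [← hP, eval_map]
    exact eval₂_comp A.val.toRingHom _ P
  rw [hlift, eval_orbitProd ρ (hb · ·)]
  simp [Q, smul_eq_mul]

/-- Let `I ⊆ R^G` be an ideal of the invariant ring of a finite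
group `G` acting on `R = K[x₁,…,xₙ]` by `K`-algebra automorphisms, and let `g` lie in
the ideal `R·I` of `R` generated by `I`. Then the norm `∏_{σ∈G} σ(g)` lies in `I`. -/
theorem stmt14 {K : Type*} [Field K] {n : ℕ} {G : Type*} [Group G] [Fintype G]
    (ρ : G →* (MvPolynomial (Fin n) K ≃ₐ[K] MvPolynomial (Fin n) K))
    (I : Ideal (invAlg ρ))
    (g : MvPolynomial (Fin n) K)
    (hg : g ∈ Ideal.span ((fun x : invAlg ρ => (x : MvPolynomial (Fin n) K)) '' I)) :
    ∃ h ∈ I, ((h : invAlg ρ) : MvPolynomial (Fin n) K) = ∏ σ : G, ρ σ g :=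
  prod_apply_mem_of_mem_span ρ (invAlg ρ) (fun _ => Iff.rfl) I hg
end

section
/- Let the cyclic group C_n act on ℂ[x_1, x_2] by multiplying both variables by a primitive n-th root of unity. Then the three invariants f_1 = x_1^n, f_2 = x_1^{n−1} x_2, f_3 = x_2^n form a separating set for the action on ℂ^2: for any v, w ∈ ℂ^2, if f_i(v) = f_i(w) for i = 1,2,3, then every invariant of the action takes the same value at v and w (equivalently, v and w lie in the same orbit). -/
open MvPolynomial

/-!
Two points `v, w` with `vᵢⁿ = wᵢⁿ` differ coordinatewise by `n`-th roots of unity; the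
invariant `x₁ⁿ⁻¹x₂` forces the two roots to coincide as soon as the first coordinate of `v`
is nonzero, and otherwise the first coordinates of both points vanish. So `w = ζᵏ v`, and every
invariant takes the same value on an orbit.
-/

theorem IsPrimitiveRoot.exists_eq_pow_mul_of_pow_eq {K : Type*} [Field K] {n : ℕ} {ζ : K}
    (hζ : IsPrimitiveRoot ζ n) (hn : 0 < n) {a b : K} (hab : a ^ n = b ^ n) :
    ∃ k : ℕ, b = ζ ^ k * a := by
  have : NeZero n := ⟨hn.ne'⟩
  by_cases ha : a = 0
  · refine ⟨0, ?_⟩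
    rw [ha, zero_pow hn.ne', eq_comm, pow_eq_zero_iff hn.ne'] at hab
    rw [ha, hab, mul_zero]
  · have hratio : (b / a) ^ n = 1 := by
      rw [div_pow, ← hab, div_self (pow_ne_zero _ ha)]
    obtain ⟨k, -, hk⟩ := hζ.eq_pow_of_pow_eq_one hratio
    exact ⟨k, by rw [hk, div_mul_cancel₀ _ ha]⟩

theorem eq_pow_mul_of_pow_pred_mul_eq {K : Type*} [Field K] {n : ℕ} (hn : 0 < n)
    {c a a' b b' : K} (hc : c ^ n = 1) (ha : a ≠ 0) (ha' : a' = c * a)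
    (h : a ^ (n - 1) * b = a' ^ (n - 1) * b') : b' = c * b := by
  have hcancel : c * a' ^ (n - 1) = a ^ (n - 1) := by
    rw [ha', mul_pow, ← mul_assoc, ← pow_succ', Nat.sub_add_cancel hn, hc, one_mul]
  apply mul_left_cancel₀ (pow_ne_zero (n - 1) ha)
  calc a ^ (n - 1) * b' = c * (a' ^ (n - 1) * b') := by rw [← hcancel, mul_assoc]
    _ = a ^ (n - 1) * (c * b) := by rw [← h, mul_left_comm]

theorem exists_eq_pow_smul_of_invariants_eq {K : Type*} [Field K] {n : ℕ} (hn : 0 < n)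
    {ζ : K} (hζ : IsPrimitiveRoot ζ n) {v w : Fin 2 → K}
    (h1 : v 0 ^ n = w 0 ^ n) (h2 : v 0 ^ (n - 1) * v 1 = w 0 ^ (n - 1) * w 1)
    (h3 : v 1 ^ n = w 1 ^ n) :
    ∃ k : ℕ, w = fun i => ζ ^ k * v i := by
  by_cases hv0 : v 0 = 0
  · have hw0 : w 0 = 0 := by
      rwa [hv0, zero_pow hn.ne', eq_comm, pow_eq_zero_iff hn.ne'] at h1
    obtain ⟨k, hk⟩ := hζ.exists_eq_pow_mul_of_pow_eq hn h3
    refine ⟨k, funext fun i => ?_⟩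
    fin_cases i
    · simp [hv0, hw0]
    · exact hk
  · obtain ⟨k, hk⟩ := hζ.exists_eq_pow_mul_of_pow_eq hn h1
    have hζk : (ζ ^ k) ^ n = 1 := by rw [← pow_mul, mul_comm, pow_mul, hζ.pow_eq_one, one_pow]
    refine ⟨k, funext fun i => ?_⟩
    fin_cases i
    · exact hk
    · exact eq_pow_mul_of_pow_pred_mul_eq hn hζk hv0 hk h2

theorem MvPolynomial.eval_smul_eq_of_aeval_C_mul_X_eq {R σ : Type*} [CommRing R] (c : R)
    (v : σ → R) {f : MvPolynomial σ R} (hf : aeval (fun i => C c * X i) f = f) :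
    eval (fun i => c * v i) f = eval v f := by
  conv_rhs => rw [← hf]
  rw [aeval_def, algebraMap_eq, ← eval_assoc]
  congr 2
  funext i
  simp

/-- Let the cyclic group `Cₙ` act on `ℂ[x₁,x₂]` by multiplying both
variables by a primitive `n`-th root of unity `ζ`. The invariants `f₁ = x₁ⁿ`,
`f₂ = x₁ⁿ⁻¹x₂`, `f₃ = x₂ⁿ` form a separating set: if they agree at `v, w ∈ ℂ²`, then
every invariant agrees at `v` and `w` and `v, w` lie in the same orbit. -/
theorem stmt15 (n : ℕ) (hn : 0 < n) (ζ : ℂ) (hζ : IsPrimitiveRoot ζ n)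
    (v w : Fin 2 → ℂ)
    (h1 : (v 0) ^ n = (w 0) ^ n)
    (h2 : (v 0) ^ (n - 1) * v 1 = (w 0) ^ (n - 1) * w 1)
    (h3 : (v 1) ^ n = (w 1) ^ n) :
    (∀ f : MvPolynomial (Fin 2) ℂ,
      (∀ k : ℕ, aeval (fun i => C (ζ ^ k) * X i) f = f) →
      eval v f = eval w f) ∧
    ∃ k : ℕ, w = fun i => ζ ^ k * v i := by
  obtain ⟨k, hw⟩ := exists_eq_pow_smul_of_invariants_eq hn hζ h1 h2 h3
  refine ⟨fun f hf => ?_, k, hw⟩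
  rw [hw, eval_smul_eq_of_aeval_C_mul_X_eq _ _ (hf k)]
end

section
/- Let a group G act on a finitely generated field extension L = K(a_1,...,a_n) of K by K-automorphisms, and let D := ∩_{σ∈G} (y_1 − σ(a_1), ..., y_n − σ(a_n)) ⊆ L[y_1,...,y_n] be the Derksen ideal. If G is a reduced Gröbner basis of D with respect to any monomial order, then the invariant field L^G is generated over K by the coefficients of the polynomials in G. -/
open MvPolynomial

/-! The coefficientwise action of `G` preserves the Derksen ideal `D`. For `g` in the reduced
Gröbner basis `B`, the difference `g - σ g` lies in `D`, and since `g` is monic all its monomials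
are monomials of `g` strictly below the leading one, none divisible by a leading monomial of `B`;
so `g - σ g = 0` and the coefficients of `B` are invariant.

Conversely, write an invariant `x` as `f(a) / g(a)` with `f, g ∈ K[y]`. Then `f - x g` vanishes
at every `σ(a)`, i.e. lies in `D`. Dividing `f` and `g` by `B` can be done over the field `F`
generated by the coefficients of `B`; the remainders satisfy `r_f - x r_g ∈ D` with no monomial
divisible by a leading monomial of `B`, hence `r_f = x r_g`, while `r_g ≠ 0` as `g(a) ≠ 0`.
Comparing leading coefficients gives `x ∈ F`. -/

namespace MvPolynomial

variable {σ R : Type*} [CommRing R]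

theorem mem_span_X_sub_C_iff_eval_eq_zero (v : σ → R) (p : MvPolynomial σ R) :
    p ∈ Ideal.span (Set.range fun i => X i - C (v i)) ↔ eval v p = 0 := by
  set J := Ideal.span (Set.range fun i => X i - C (v i))
  constructor
  · have hJ : J ≤ RingHom.ker (eval v) := by
      rw [Ideal.span_le]
      rintro _ ⟨i, rfl⟩
      simp [RingHom.mem_ker]
    exact fun hp => hJ hp
  · have sub_C_eval_mem : ∀ q : MvPolynomial σ R, q - C (eval v q) ∈ J := by
      intro q
      induction q using MvPolynomial.induction_on with
      | C c => simp
      | add p q hp hq => simpa [sub_add_sub_comm] using J.add_mem hp hq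
      | mul_X p i hp =>
        have h : p * X i - C (eval v (p * X i)) =
            p * (X i - C (v i)) + (p - C (eval v p)) * C (v i) := by
          simp only [eval_mul, eval_X, C_mul]
          ring
        rw [h]
        exact J.add_mem (J.mul_mem_left _ (Ideal.subset_span ⟨i, rfl⟩)) (J.mul_mem_right _ hp)
    intro h
    simpa [h] using sub_C_eval_mem p

theorem exists_map_subtype_eq {S : Subring R} {p : MvPolynomial σ R} (hp : ∀ d, p.coeff d ∈ S) :
    ∃ q : MvPolynomial σ S, map S.subtype q = p := by
  rw [← Set.mem_range, mem_range_map_iff_coeffs_subset]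
  intro c hc
  obtain ⟨d, -, rfl⟩ := mem_coeffs_iff.mp hc
  exact ⟨⟨_, hp d⟩, rfl⟩

end MvPolynomial

namespace MonomialOrder

variable {σ : Type*} {m : MonomialOrder σ}

variable (m) in
def standardMonomials {R : Type*} [CommSemiring R] (B : Set (MvPolynomial σ R)) :
    Set (σ →₀ ℕ) :=
  {c | ∀ b ∈ B, ¬ m.degree b ≤ c}

section Map

variable {R S : Type*} [CommSemiring R] [CommSemiring S] {φ : S →+* R}

theorem degree_map_of_injective (hφ : Function.Injective φ) (p : MvPolynomial σ S) :
    m.degree (map φ p) = m.degree p := by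
  rw [degree, degree, support_map_of_injective p hφ]

theorem Monic.of_map (hφ : Function.Injective φ) {p : MvPolynomial σ S}
    (hp : m.Monic (map φ p)) : m.Monic p := by
  have h : m.leadingCoeff (map φ p) = φ (m.leadingCoeff p) := by
    rw [leadingCoeff, leadingCoeff, degree_map_of_injective hφ, coeff_map]
  exact hφ (by rw [← h, map_one]; exact hp)

end Map

theorem eq_zero_of_mem_restrictSupport {R : Type*} [CommSemiring R]
    {I : Ideal (MvPolynomial σ R)} {B : Set (MvPolynomial σ R)}
    (hGB : ∀ f ∈ I, f ≠ 0 → ∃ b ∈ B, m.degree b ≤ m.degree f) {r : MvPolynomial σ R}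
    (hrI : r ∈ I) (hr : r ∈ restrictSupport R (m.standardMonomials B)) : r = 0 := by
  by_contra h0
  obtain ⟨b, hb, hle⟩ := hGB r hrI h0
  exact hr ((m.degree_mem_support_iff r).mpr h0) b hb hle

variable {R : Type*} [CommRing R]

theorem exists_remainder_of_coeff_mem (S : Subring R) {B : Set (MvPolynomial σ R)}
    (hB : ∀ b ∈ B, m.Monic b) (hBS : ∀ b ∈ B, ∀ d, b.coeff d ∈ S)
    {f : MvPolynomial σ R} (hf : ∀ d, f.coeff d ∈ S) :
    ∃ r : MvPolynomial σ R, (∀ d, r.coeff d ∈ S) ∧ f - r ∈ Ideal.span B ∧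
      r ∈ restrictSupport R (m.standardMonomials B) := by
  have hφ : Function.Injective S.subtype := Subtype.val_injective
  set B' := map S.subtype ⁻¹' B
  have hB' : ∀ b ∈ B', IsUnit (m.leadingCoeff b) := fun b hb =>
    ((hB _ hb).of_map hφ).symm ▸ isUnit_one
  obtain ⟨f', rfl⟩ := exists_map_subtype_eq hf
  obtain ⟨g, r', hf', -, hr'⟩ := m.div_set hB' f'
  refine ⟨map S.subtype r', fun d => by simp [coeff_map], ?_, ?_⟩
  · have hg : Finsupp.linearCombination _ (fun b : B' => (b : MvPolynomial σ S)) g ∈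
        Ideal.span B' := by
      rw [Finsupp.linearCombination_apply]
      exact Ideal.sum_mem _ fun b _ => Ideal.mul_mem_left _ _ (Ideal.subset_span b.2)
    rw [hf', map_add, add_sub_cancel_right]
    refine Ideal.span_le.mpr ?_ (Ideal.map_span (map S.subtype) B' ▸ Ideal.mem_map_of_mem _ hg)
    rintro _ ⟨b, hb, rfl⟩
    exact Ideal.subset_span hb
  · rw [mem_restrictSupport_iff, support_map_of_injective r' hφ]
    intro c hc b hb
    obtain ⟨b', rfl⟩ := exists_map_subtype_eq (hBS b hb)
    rw [degree_map_of_injective hφ]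
    exact hr' c hc b' hb

theorem mem_of_sub_C_mul_mem {L : Type*} [Field L] (S : Subfield L)
    {I : Ideal (MvPolynomial σ L)} {B : Set (MvPolynomial σ L)} (hBI : B ⊆ I)
    (hGB : ∀ f ∈ I, f ≠ 0 → ∃ b ∈ B, m.degree b ≤ m.degree f)
    (hB : ∀ b ∈ B, m.Monic b) (hBS : ∀ b ∈ B, ∀ d, b.coeff d ∈ S)
    {f g : MvPolynomial σ L} (hf : ∀ d, f.coeff d ∈ S) (hg : ∀ d, g.coeff d ∈ S) (hgI : g ∉ I)
    {x : L} (hx : f - C x * g ∈ I) : x ∈ S := by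
  have hspan : Ideal.span B ≤ I := Ideal.span_le.mpr hBI
  obtain ⟨rf, hrfS, hrf, hrf_std⟩ := exists_remainder_of_coeff_mem S.toSubring hB hBS hf
  obtain ⟨rg, hrgS, hrg, hrg_std⟩ := exists_remainder_of_coeff_mem S.toSubring hB hBS hg
  have hrI : rf - C x * rg ∈ I := by
    have h : rf - C x * rg = (f - C x * g) - (f - rf) + C x * (g - rg) := by ring
    rw [h]
    exact I.add_mem (I.sub_mem hx (hspan hrf)) (I.mul_mem_left _ (hspan hrg))
  have hr : rf = C x * rg := by
    rw [← sub_eq_zero]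
    refine eq_zero_of_mem_restrictSupport hGB hrI ?_
    rw [C_mul']
    exact Submodule.sub_mem _ hrf_std (Submodule.smul_mem _ x hrg_std)
  have hrg0 : rg ≠ 0 := by
    rintro rfl
    exact hgI (hspan (by simpa using hrg))
  set d := m.degree rg
  have hd : rg.coeff d ≠ 0 := m.coeff_degree_ne_zero_iff.mpr hrg0
  have hx : x = rf.coeff d / rg.coeff d := by
    rw [hr, coeff_C_mul, mul_div_cancel_right₀ _ hd]
  exact hx ▸ S.div_mem (hrfS d) (hrgS d)

theorem map_eq_self_of_reduced {φ : R →+* R} {I : Ideal (MvPolynomial σ R)}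
    (hI : ∀ f ∈ I, map φ f ∈ I) {B : Set (MvPolynomial σ R)} (hBI : B ⊆ I)
    (hGB : ∀ f ∈ I, f ≠ 0 → ∃ b ∈ B, m.degree b ≤ m.degree f)
    (hB : ∀ b ∈ B, m.Monic b)
    (hred : ∀ g ∈ B, ∀ g' ∈ B, g ≠ g' → ∀ d ∈ g.support, ¬ m.degree g' ≤ d)
    {g : MvPolynomial σ R} (hg : g ∈ B) : map φ g = g := by
  by_contra hne
  set h := g - map φ g
  have h0 : h ≠ 0 := sub_ne_zero.mpr (Ne.symm hne)
  have hdeg_h : m.degree h ∈ h.support := (m.degree_mem_support_iff h).mpr h0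
  have hsupp : h.support ⊆ g.support := by
    intro d hd
    rw [MvPolynomial.mem_support_iff] at hd ⊢
    intro hgd
    simp [h, coeff_map, hgd] at hd
  have hlead : h.coeff (m.degree g) = 0 := by
    simp only [h, coeff_sub, coeff_map]
    rw [← leadingCoeff, hB g hg, map_one, sub_self]
  obtain ⟨b, hb, hle⟩ := hGB h (I.sub_mem (hBI hg) (hI g (hBI hg))) h0
  obtain rfl | hgb := eq_or_ne g b
  · have hdeg : m.degree h = m.degree g :=
      m.toSyn.injective (le_antisymm (m.le_degree (hsupp hdeg_h)) (m.toSyn_monotone hle))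
    exact (MvPolynomial.mem_support_iff.mp hdeg_h) (hdeg ▸ hlead)
  · exact hred g hg b hb hgb _ (hsupp hdeg_h) hle

end MonomialOrder

section Derksen

variable {K L G ι : Type*} [CommSemiring K] [CommRing L] [Algebra K L] [Group G]

noncomputable def derksenIdeal (ρ : G →* (L ≃ₐ[K] L)) (a : ι → L) : Ideal (MvPolynomial ι L) :=
  ⨅ σ : G, Ideal.span (Set.range fun i => X i - C (ρ σ (a i)))

variable {ρ : G →* (L ≃ₐ[K] L)} {a : ι → L}

theorem mem_derksenIdeal_iff {f : MvPolynomial ι L} :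
    f ∈ derksenIdeal ρ a ↔ ∀ σ, eval (fun i => ρ σ (a i)) f = 0 := by
  simp only [derksenIdeal, Ideal.mem_iInf, mem_span_X_sub_C_iff_eval_eq_zero]

theorem map_mem_derksenIdeal {f : MvPolynomial ι L} (hf : f ∈ derksenIdeal ρ a) (τ : G) :
    map (ρ τ : L →+* L) f ∈ derksenIdeal ρ a := by
  rw [mem_derksenIdeal_iff] at hf ⊢
  intro σ
  have h := congrArg (ρ τ) (hf (τ⁻¹ * σ))
  have hcomp : (⇑(ρ τ : L →+* L) ∘ fun i => ρ (τ⁻¹ * σ) (a i)) = fun i => ρ σ (a i) := by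
    funext i
    simp [← AlgEquiv.mul_apply, ← map_mul]
  rwa [map_zero, ← RingHom.coe_coe, map_eval, hcomp] at h

theorem sub_C_mul_mem_derksenIdeal {r s : MvPolynomial ι K} {x : L} (hx : ∀ σ, ρ σ x = x)
    (hxrs : x * aeval a s = aeval a r) :
    map (algebraMap K L) r - C x * map (algebraMap K L) s ∈ derksenIdeal ρ a := by
  rw [mem_derksenIdeal_iff]
  intro σ
  have h : ∀ p : MvPolynomial ι K,
      eval (fun i => ρ σ (a i)) (map (algebraMap K L) p) = ρ σ (aeval a p) := by
    intro p
    rw [eval_map, ← aeval_def]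
    exact (comp_aeval_apply (f := a) (ρ σ).toAlgHom p).symm
  rw [map_sub, map_mul, eval_C, h, h, ← hx σ, ← map_mul, hxrs, sub_self]

theorem eval_eq_zero_of_mem_derksenIdeal {f : MvPolynomial ι L} (hf : f ∈ derksenIdeal ρ a) :
    eval a f = 0 := by
  simpa using mem_derksenIdeal_iff.mp hf 1

end Derksen

theorem stmt17_general {K L : Type*} [Field K] [Field L] [Algebra K L]
    {n : ℕ} (a : Fin n → L)
    (hgen : IntermediateField.adjoin K (Set.range a) = ⊤)
    {G : Type*} [Group G] (ρ : G →* (L ≃ₐ[K] L))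
    (D : Ideal (MvPolynomial (Fin n) L))
    (hD : D = ⨅ σ : G, Ideal.span (Set.range fun i => X i - C (ρ σ (a i))))
    (m : MonomialOrder (Fin n))
    (B : Finset (MvPolynomial (Fin n) L))
    (hBspan : Ideal.span (B : Set (MvPolynomial (Fin n) L)) = D)
    -- `B` is a Gröbner basis: the leading monomial of every nonzero element of `D`
    -- is divisible by the leading monomial of some element of `B`
    (hGB : ∀ f ∈ D, f ≠ 0 → ∃ g ∈ B,
      m.toSyn.symm (g.support.sup ⇑m.toSyn) ≤ m.toSyn.symm (f.support.sup ⇑m.toSyn))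
    -- `B` is reduced: each element is monic and none of its monomials is divisible
    -- by the leading monomial of another element of `B`
    (hmonic : ∀ g ∈ B, g.coeff (m.toSyn.symm (g.support.sup ⇑m.toSyn)) = 1)
    (hred : ∀ g ∈ B, ∀ g' ∈ B, g ≠ g' → ∀ d ∈ g.support,
      ¬ m.toSyn.symm (g'.support.sup ⇑m.toSyn) ≤ d) :
    ∀ x : L, x ∈ IntermediateField.adjoin K
        {c : L | ∃ g ∈ B, ∃ d : Fin n →₀ ℕ, g.coeff d = c} ↔
      ∀ σ, ρ σ x = x := by
  obtain rfl : D = derksenIdeal ρ a := hD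
  have hBD : (B : Set (MvPolynomial (Fin n) L)) ⊆ derksenIdeal ρ a := hBspan ▸ Ideal.subset_span
  set F := IntermediateField.adjoin K {c : L | ∃ g ∈ B, ∃ d : Fin n →₀ ℕ, g.coeff d = c}
  have hBF : ∀ g ∈ B, ∀ d, g.coeff d ∈ F := fun g hg d =>
    IntermediateField.subset_adjoin _ _ ⟨g, hg, d, rfl⟩
  suffices hF : F = IntermediateField.fixedField ρ.range by
    intro x
    simp [hF, IntermediateField.mem_fixedField_iff]
  refine le_antisymm ?_ fun x hx => ?_
  · rw [IntermediateField.adjoin_le_iff]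
    rintro _ ⟨g, hg, d, rfl⟩
    rw [SetLike.mem_coe, IntermediateField.mem_fixedField_iff]
    rintro _ ⟨σ, rfl⟩
    have hfix : map (ρ σ : L →+* L) g = g := MonomialOrder.map_eq_self_of_reduced
      (fun f hf => map_mem_derksenIdeal hf σ) hBD hGB hmonic hred hg
    conv_rhs => rw [← hfix, coeff_map]
    rfl
  · obtain ⟨r, s, rfl⟩ := (IntermediateField.mem_adjoin_range_iff K a x).mp (hgen ▸ trivial)
    by_cases hs : aeval a s = 0
    · simp [hs]
    have hinv : ∀ σ, ρ σ (aeval a r / aeval a s) = aeval a r / aeval a s := by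
      simpa [IntermediateField.mem_fixedField_iff] using hx
    have hcoeff : ∀ (p : MvPolynomial (Fin n) K) d, (map (algebraMap K L) p).coeff d ∈ F :=
      fun p d => coeff_map (algebraMap K L) p d ▸ F.algebraMap_mem _
    refine MonomialOrder.mem_of_sub_C_mul_mem F.toSubfield hBD hGB hmonic hBF (hcoeff r) (hcoeff s)
      (fun hsD => hs ?_) (sub_C_mul_mem_derksenIdeal hinv (div_mul_cancel₀ _ hs))
    simpa [eval_map, aeval_def] using eval_eq_zero_of_mem_derksenIdeal hsD

/-- Let a group `G` act on a finitely generated field extension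
`L = K(a₁,…,aₙ)` by `K`-automorphisms, and let
`D = ∩_{σ∈G} (y₁ − σ(a₁), …, yₙ − σ(aₙ)) ⊆ L[y₁,…,yₙ]` be the Derksen ideal. If `B`
is a reduced Gröbner basis of `D` with respect to a monomial order `m`, then the
invariant field `L^G` is generated over `K` by the coefficients of the elements
of `B`. -/
theorem stmt17 {K L : Type*} [Field K] [Field L] [Algebra K L]
    {n : ℕ} (a : Fin n → L)
    (hgen : IntermediateField.adjoin K (Set.range a) = ⊤)
    {G : Type*} [Group G] (ρ : G →* (L ≃ₐ[K] L))
    (D : Ideal (MvPolynomial (Fin n) L))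
    (hD : D = ⨅ σ : G, Ideal.span (Set.range fun i => X i - C (ρ σ (a i))))
    (m : MonomialOrder (Fin n))
    (B : Finset (MvPolynomial (Fin n) L))
    (hB0 : (0 : MvPolynomial (Fin n) L) ∉ B)
    (hBspan : Ideal.span (B : Set (MvPolynomial (Fin n) L)) = D)
    -- `B` is a Gröbner basis: the leading monomial of every nonzero element of `D`
    -- is divisible by the leading monomial of some element of `B`
    (hGB : ∀ f ∈ D, f ≠ 0 → ∃ g ∈ B,
      m.toSyn.symm (g.support.sup ⇑m.toSyn) ≤ m.toSyn.symm (f.support.sup ⇑m.toSyn))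
    -- `B` is reduced: each element is monic and none of its monomials is divisible
    -- by the leading monomial of another element of `B`
    (hmonic : ∀ g ∈ B, g.coeff (m.toSyn.symm (g.support.sup ⇑m.toSyn)) = 1)
    (hred : ∀ g ∈ B, ∀ g' ∈ B, g ≠ g' → ∀ d ∈ g.support,
      ¬ m.toSyn.symm (g'.support.sup ⇑m.toSyn) ≤ d) :
    ∀ x : L, x ∈ IntermediateField.adjoin K
        {c : L | ∃ g ∈ B, ∃ d : Fin n →₀ ℕ, g.coeff d = c} ↔
      ∀ σ, ρ σ x = x :=
  stmt17_general a hgen ρ D hD m B hBspan hGB hmonic hred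
end

section
/- Let G be a group acting on R = K[x_1,...,x_n] by K-algebra automorphisms. Then there exists a finite subset S ⊆ R^G that is separating: for all v, w ∈ K^n, if some invariant f ∈ R^G satisfies f(v) ≠ f(w), then some g ∈ S satisfies g(v) ≠ g(w). -/
/-!
For an invariant `f`, write `Δf := f(x) - f(y) ∈ K[x, y]`, so that `f` separates `v` and `w` iff
`Δf` does not vanish at `(v, w)`. By Hilbert's basis theorem the ideal generated by all `Δf` is
generated by finitely many `Δf₁, …, Δfₘ`; if the `fᵢ` agree at `v` and `w`, the whole ideal
vanishes at `(v, w)`, so every invariant agrees there.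
-/

open MvPolynomial

theorem IsNoetherian.exists_finset_subset_span_image_eq (R : Type*) {M ι : Type*} [Semiring R]
    [AddCommMonoid M] [Module R M] [IsNoetherian R M] (f : ι → M) (s : Set ι) :
    ∃ t : Finset ι, ↑t ⊆ s ∧ Submodule.span R (f '' t) = Submodule.span R (f '' s) := by
  classical
  obtain ⟨u, hus, hspan⟩ :=
    (Submodule.fg_span_iff_fg_span_finset_subset (f '' s)).mp
      (IsNoetherian.noetherian (Submodule.span R (f '' s)))
  obtain ⟨t, hts, rfl⟩ := Finset.subset_set_image_iff.mp hus
  exact ⟨t, hts, by rw [hspan, Finset.coe_image]⟩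

namespace MvPolynomial

variable {R σ : Type*}

noncomputable def diagDiff [CommRing R] (f : MvPolynomial σ R) : MvPolynomial (σ ⊕ σ) R :=
  rename Sum.inl f - rename Sum.inr f

theorem eval_sumElim_diagDiff [CommRing R] (v w : σ → R) (f : MvPolynomial σ R) :
    eval (Sum.elim v w) (diagDiff f) = eval v f - eval w f := by
  simp [diagDiff, eval_rename]

theorem exists_finset_subset_separating [CommRing R] [IsNoetherianRing R] [Finite σ]
    (I : Set (MvPolynomial σ R)) :
    ∃ S : Finset (MvPolynomial σ R), ↑S ⊆ I ∧ ∀ v w : σ → R,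
      (∃ f ∈ I, eval v f ≠ eval w f) → ∃ g ∈ S, eval v g ≠ eval w g := by
  obtain ⟨S, hSI, hspan⟩ :=
    IsNoetherian.exists_finset_subset_span_image_eq (MvPolynomial (σ ⊕ σ) R) diagDiff I
  refine ⟨S, hSI, ?_⟩
  rintro v w ⟨f, hfI, hf⟩
  by_contra! hS
  have hker : Ideal.span (diagDiff '' I) ≤ RingHom.ker (eval (Sum.elim v w)) := by
    rw [Ideal.span, ← hspan, Submodule.span_le]
    rintro _ ⟨g, hg, rfl⟩
    simp [eval_sumElim_diagDiff, hS g hg]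
  have hf' := hker (Ideal.subset_span ⟨f, hfI, rfl⟩)
  rw [RingHom.mem_ker, eval_sumElim_diagDiff, sub_eq_zero] at hf'
  exact hf hf'

end MvPolynomial

/-- For any group `G` acting on `R = K[x₁,…,xₙ]` by `K`-algebra
automorphisms, there exists a finite separating set of invariants: a finite
`S ⊆ R^G` such that whenever some invariant distinguishes two points `v, w ∈ Kⁿ`,
some element of `S` does. -/
theorem stmt19 {K : Type*} [Field K] {n : ℕ} {G : Type*} [Group G]
    (ρ : G →* (MvPolynomial (Fin n) K ≃ₐ[K] MvPolynomial (Fin n) K)) :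
    ∃ S : Finset (MvPolynomial (Fin n) K),
      (∀ g ∈ S, ∀ σ, ρ σ g = g) ∧
      ∀ v w : Fin n → K,
        (∃ f : MvPolynomial (Fin n) K, (∀ σ, ρ σ f = f) ∧ eval v f ≠ eval w f) →
        ∃ g ∈ S, eval v g ≠ eval w g := by
  exact exists_finset_subset_separating {f | ∀ σ, ρ σ f = f}
end
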